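/- arXiv:1008.1843 — 9 statements merged into one kernel-verified Lean document; each statement's English description precedes it below -/
import Mathlib

section
/- For a binomial random variable X with parameters n and k/n (where 1 ≤ k ≤ n), the limit as n → ∞ of E[min(X, k)] equals k·(1 - k^k/(e^k · k!)). -/
/-!
For `n ≥ k` the weights of `Binomial(n, k/n)` sum to one, so
`E[min(X, k)] = k - ∑_{t < k} (k - t) P[X = t]`, a sum with a fixed number of terms.
By the Poisson limit theorem each `P[X = t]` tends to `e^{-k} k^t / t!`, and the limiting sum
telescopes: `∑_{t < m} (x - t) x^t / t! = m x^m / m!`.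
-/

/-- `Phi n k` is the expectation of `min(X, k)` for `X ~ Binomial(n, k/n)`. -/
noncomputable def Phi (n k : ℕ) : ℝ :=
  ∑ t ∈ Finset.range (n + 1),
    (n.choose t : ℝ) * ((k : ℝ) / n) ^ t * (1 - (k : ℝ) / n) ^ (n - t) * (min t k : ℕ)

open Filter Finset Topology

theorem sum_range_choose_mul_pow_mul_one_sub_pow (n : ℕ) (p : ℝ) :
    ∑ t ∈ range (n + 1), (n.choose t : ℝ) * p ^ t * (1 - p) ^ (n - t) = 1 := by
  have h := add_pow p (1 - p) n
  rw [add_sub_cancel, one_pow] at h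
  exact (sum_congr rfl fun t _ => by ring).trans h.symm

theorem sum_range_mul_min_eq_sub {k n : ℕ} (hkn : k ≤ n) (f : ℕ → ℝ) :
    ∑ t ∈ range (n + 1), f t * (min t k : ℕ) =
      k * ∑ t ∈ range (n + 1), f t - ∑ t ∈ range k, f t * (k - t) := by
  have hmin (t : ℕ) : ((min t k : ℕ) : ℝ) = k - (k - t : ℕ) := by
    rcases le_total t k with h | h
    · rw [min_eq_left h, Nat.cast_sub h]; ring
    · rw [min_eq_right h, Nat.sub_eq_zero_of_le h]; simp
  have htrunc : ∑ t ∈ range (n + 1), f t * (k - t : ℕ) = ∑ t ∈ range k, f t * (k - t) := by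
    rw [← sum_subset (range_subset_range.2 (by omega : k ≤ n + 1))]
    · exact sum_congr rfl fun t ht => by rw [Nat.cast_sub (mem_range.1 ht).le]
    · intro t _ htk
      rw [Nat.sub_eq_zero_of_le (not_lt.1 (mem_range.not.1 htk))]
      simp
  rw [← htrunc, mul_sum, ← sum_sub_distrib]
  exact sum_congr rfl fun t _ => by rw [hmin]; ring

theorem sum_range_sub_mul_pow_div_factorial (x : ℝ) (m : ℕ) :
    ∑ t ∈ range m, (x - t) * x ^ t / t.factorial = m * x ^ m / m.factorial := by
  induction m with
  | zero => simp
  | succ m ih =>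
    rw [sum_range_succ, ih, Nat.factorial_succ]
    push_cast
    field_simp
    ring

theorem tendsto_choose_mul_div_pow_mul_one_sub_div_pow (r : ℝ) (t : ℕ) :
    Tendsto (fun n : ℕ => (n.choose t : ℝ) * (r / n) ^ t * (1 - r / n) ^ (n - t)) atTop
      (𝓝 (Real.exp (-r) * r ^ t / t.factorial)) := by
  refine ProbabilityTheory.tendsto_choose_mul_pow_of_tendsto_mul_atTop t
    (tendsto_const_nhds.congr' ?_)
  filter_upwards [eventually_ne_atTop 0] with n hn
  field_simp

theorem Phi_eq_sub {k n : ℕ} (hkn : k ≤ n) :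
    Phi n k = k - ∑ t ∈ range k,
      (n.choose t : ℝ) * ((k : ℝ) / n) ^ t * (1 - (k : ℝ) / n) ^ (n - t) * (k - t) := by
  rw [Phi, sum_range_mul_min_eq_sub hkn, sum_range_choose_mul_pow_mul_one_sub_pow, mul_one]

theorem phi_tendsto_general (k : ℕ) :
    Filter.Tendsto (fun n => Phi n k) Filter.atTop
      (nhds ((k : ℝ) * (1 - (k : ℝ) ^ k / (Real.exp k * (k.factorial : ℝ))))) := by
  have hlim := tendsto_const_nhds (x := (k : ℝ)).sub <| tendsto_finsetSum (range k) fun t _ =>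
    (tendsto_choose_mul_div_pow_mul_one_sub_div_pow k t).mul_const ((k : ℝ) - t)
  have hvalue : (k : ℝ) - ∑ t ∈ range k, Real.exp (-k) * (k : ℝ) ^ t / t.factorial * (k - t)
      = k * (1 - (k : ℝ) ^ k / (Real.exp k * k.factorial)) := calc
    _ = k - Real.exp (-k) * ∑ t ∈ range k, ((k : ℝ) - t) * (k : ℝ) ^ t / t.factorial := by
      rw [mul_sum]
      exact congrArg _ (sum_congr rfl fun t _ => by ring)
    _ = k - Real.exp (-k) * (k * (k : ℝ) ^ k / k.factorial) := by
      rw [sum_range_sub_mul_pow_div_factorial]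
    _ = k * (1 - (k : ℝ) ^ k / (Real.exp k * k.factorial)) := by
      rw [Real.exp_neg]
      field_simp
  rw [hvalue] at hlim
  refine hlim.congr' ?_
  filter_upwards [eventually_ge_atTop k] with n hn
  exact (Phi_eq_sub hn).symm

theorem phi_tendsto (k : ℕ) (hk : 1 ≤ k) :
    Filter.Tendsto (fun n => Phi n k) Filter.atTop
      (nhds ((k : ℝ) * (1 - (k : ℝ) ^ k / (Real.exp k * (k.factorial : ℝ))))) :=
  phi_tendsto_general k
end

section
/- Define Φ(n,k) = E[min(X_{n,k}, k)] where X_{n,k} ~ Binomial(n, k/n). Then Φ(n,k) is monotonically non-increasing in n: for all n ≥ k ≥ 1, Φ(n+1,k) ≤ Φ(n,k). -/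
open Finset

lemma bernoulli_step (m : ℕ) (hm : 1 ≤ m) :
    ((m+2:ℝ)/(m+1))^(m+2) ≤ ((m+1:ℝ)/m)^(m+1) := by
  have hM : (1:ℝ) ≤ (m:ℝ) := by exact_mod_cast hm
  have hM0 : (0:ℝ) < m := by linarith
  have h2 : (0:ℝ) < (m:ℝ) + 2 := by linarith
  have h1 : (0:ℝ) < (m:ℝ) + 1 := by linarith
  have ha : (0:ℝ) ≤ 1/((m:ℝ)*((m:ℝ)+2)) := by positivity
  have key := one_add_mul_le_pow (a := 1/((m:ℝ)*((m:ℝ)+2))) (by linarith) (m+2)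
  have e1 : 1 + ((m+2:ℕ):ℝ) * (1/((m:ℝ)*((m:ℝ)+2))) = ((m:ℝ)+1)/m := by
    push_cast
    field_simp
  have e2 : 1 + 1/((m:ℝ)*((m:ℝ)+2)) = (((m:ℝ)+1)/m) * (((m:ℝ)+1)/((m:ℝ)+2)) := by
    field_simp
    ring
  rw [e1, e2, mul_pow] at key
  -- key : (m+1)/m ≤ ((m+1)/m)^(m+2) * ((m+1)/(m+2))^(m+2)
  have hpos : (0:ℝ) < (((m:ℝ)+2)/((m:ℝ)+1))^(m+2) := by positivity
  have key2 : ((m:ℝ)+1)/m * (((m:ℝ)+2)/((m:ℝ)+1))^(m+2)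
      ≤ ((m:ℝ)+1)/((m:ℝ))^(1) * (((m:ℝ)+1)/m)^(m+1) := by
    calc ((m:ℝ)+1)/m * (((m:ℝ)+2)/((m:ℝ)+1))^(m+2)
        ≤ (((m:ℝ)+1)/m)^(m+2) * (((m:ℝ)+1)/((m:ℝ)+2))^(m+2) * (((m:ℝ)+2)/((m:ℝ)+1))^(m+2) := by
          exact mul_le_mul_of_nonneg_right key (le_of_lt hpos)
      _ = (((m:ℝ)+1)/m)^(m+2) * ((((m:ℝ)+1)/((m:ℝ)+2)) * (((m:ℝ)+2)/((m:ℝ)+1)))^(m+2) := by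
          rw [mul_pow]; ring
      _ = (((m:ℝ)+1)/m)^(m+2) := by
          rw [div_mul_div_comm, mul_comm ((m:ℝ)+1), div_self (by positivity), one_pow, mul_one]
      _ = ((m:ℝ)+1)/((m:ℝ))^(1) * (((m:ℝ)+1)/m)^(m+1) := by
          rw [pow_one, pow_succ]; ring
  rw [pow_one] at key2
  have hq : (0:ℝ) < ((m:ℝ)+1)/m := by positivity
  exact le_of_mul_le_mul_left (by linarith [key2]) hq

lemma ratio_antitone {m n : ℕ} (hm : 1 ≤ m) (hmn : m ≤ n) :
    ((n+1:ℝ)/n)^(n+1) ≤ ((m+1:ℝ)/m)^(m+1) := by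
  induction n, hmn using Nat.le_induction with
  | base => exact le_refl _
  | succ n hmn ih =>
    have := bernoulli_step n (le_trans hm hmn)
    calc (((n+1:ℕ)+1:ℝ)/((n+1:ℕ):ℝ))^(n+1+1) = ((n+2:ℝ)/(n+1))^(n+2) := by push_cast; ring_nf
      _ ≤ ((n+1:ℝ)/n)^(n+1) := this
      _ ≤ _ := ih

lemma nat_ineq {m n : ℕ} (hmn : m ≤ n) :
    m^(m+1) * (n+1)^(n+1) ≤ (m+1)^(m+1) * n^(n+1) := by
  rcases Nat.eq_zero_or_pos m with h | h
  · subst h; simp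
  have hn : 0 < n := lt_of_lt_of_le h hmn
  have hR := ratio_antitone h hmn
  have hm0 : (0:ℝ) < (m:ℝ) := by exact_mod_cast h
  have hn0 : (0:ℝ) < (n:ℝ) := by exact_mod_cast hn
  rw [div_pow, div_pow, div_le_div_iff₀ (by positivity) (by positivity)] at hR
  have : ((m:ℝ))^(m+1) * ((n:ℝ)+1)^(n+1) ≤ ((m:ℝ)+1)^(m+1) * (n:ℝ)^(n+1) := by
    nlinarith [hR]
  exact_mod_cast this



lemma nat_main (k m : ℕ) :
    k^(k+1) * ((k+m).choose k) * m^(m+1) * (k+m+1)^(k+m+2)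
      ≤ k^(k+1) * ((k+m+1).choose k) * (m+1)^(m+2) * (k+m)^(k+m+1) := by
  have hch : (k+m).choose k * (k+m+1) = (k+m+1).choose k * (m+1) := by
    have h := Nat.choose_mul_succ_eq (k+m) k
    have he : k + m + 1 - k = m + 1 := by omega
    rw [he] at h
    exact h
  have key := nat_ineq (Nat.le_add_left m k)
  calc k^(k+1) * ((k+m).choose k) * m^(m+1) * (k+m+1)^(k+m+2)
      = (k^(k+1) * ((k+m).choose k * (k+m+1))) * (m^(m+1) * (k+m+1)^(k+m+1)) := by
        rw [pow_succ (k+m+1) (k+m+1)]; ring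
    _ = (k^(k+1) * ((k+m+1).choose k * (m+1))) * (m^(m+1) * (k+m+1)^(k+m+1)) := by rw [hch]
    _ ≤ (k^(k+1) * ((k+m+1).choose k * (m+1))) * ((m+1)^(m+1) * (k+m)^(k+m+1)) :=
        Nat.mul_le_mul_left _ key
    _ = k^(k+1) * ((k+m+1).choose k) * (m+1)^(m+2) * (k+m)^(k+m+1) := by
        rw [pow_succ (m+1) (m+1)]; ring

lemma A_eq (n k : ℕ) (hkn : k ≤ n) (hn : 0 < n) :
    (k:ℝ)*(1-(k:ℝ)/n)*(n.choose k)*((k:ℝ)/n)^k*(1-(k:ℝ)/n)^(n-k)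
      = ((k^(k+1) * n.choose k * (n-k)^(n-k+1) : ℕ) : ℝ) / ((n:ℝ)^(n+1)) := by
  have hn0 : ((n:ℝ)) ≠ 0 := by positivity
  have h1 : 1 - (k:ℝ)/n = ((n-k:ℕ):ℝ)/n := by
    rw [Nat.cast_sub hkn]; field_simp
  rw [h1, div_pow, div_pow]
  push_cast
  rw [eq_div_iff (by positivity)]
  have hpow : ((n:ℝ))^(n+1) = (n:ℝ)^(n-k) * (n:ℝ)^k * n := by
    rw [← pow_add, ← pow_succ]
    congr 1
    omega
  rw [hpow, pow_succ (((n-k:ℕ)):ℝ) (n-k)]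
  field_simp
  ring

lemma phi_closed (n k : ℕ) (hk : 1 ≤ k) (hkn : k ≤ n) :
    Phi n k = k - (k:ℝ) * (1 - (k:ℝ)/n) * (n.choose k) * ((k:ℝ)/n)^k * (1 - (k:ℝ)/n)^(n-k) := by
  have hn : 0 < n := lt_of_lt_of_le hk hkn
  have hn0 : ((n:ℝ)) ≠ 0 := by positivity
  set p : ℝ := (k:ℝ)/n with hp
  have hnp : (n:ℝ) * p = k := by rw [hp]; field_simp
  have hsum1 : ∑ t ∈ range (n+1), (n.choose t : ℝ) * p ^ t * (1 - p) ^ (n - t) * k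
      = k := by
    have hbin := add_pow p (1-p) n
    simp only [add_sub_cancel, one_pow] at hbin
    calc ∑ t ∈ range (n+1), (n.choose t : ℝ) * p ^ t * (1 - p) ^ (n - t) * k
        = (∑ t ∈ range (n+1), p ^ t * (1-p) ^ (n - t) * (n.choose t : ℝ)) * k := by
          rw [Finset.sum_mul]; apply Finset.sum_congr rfl; intro t _; ring
      _ = k := by rw [← hbin, one_mul]
  -- telescoping for the second sum
  set F : ℕ → ℝ := fun t => t * (1-p) * (n.choose t : ℝ) * p ^ t * (1-p) ^ (n - t) with hF
  have hterm : ∀ t ∈ range k,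
      (n.choose t : ℝ) * p ^ t * (1 - p) ^ (n - t) * (((k - t : ℕ)):ℝ)
        = F (t+1) - F t := by
    intro t ht
    rw [Finset.mem_range] at ht
    have htn : t + 1 ≤ n := le_trans ht hkn
    have he : n - t = (n - (t+1)) + 1 := by omega
    have hc : ((n.choose (t+1) : ℝ)) * (t+1) = (n.choose t : ℝ) * ((n:ℝ) - t) := by
      have h := Nat.choose_succ_right_eq n t
      have htn' : t ≤ n := by omega
      have hcast : ((n.choose (t+1) * (t+1) : ℕ) : ℝ) = ((n.choose t * (n - t) : ℕ) : ℝ) := by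
        exact_mod_cast h
      rw [Nat.cast_mul, Nat.cast_mul, Nat.cast_sub htn'] at hcast
      push_cast at hcast ⊢
      linarith
    have hkt : (((k - t : ℕ)):ℝ) = (k:ℝ) - t := by
      rw [Nat.cast_sub (le_of_lt ht)]
    rw [hF]
    simp only []
    rw [hkt, he]
    have hexp : (1-p) ^ ((n - (t+1)) + 1) = (1-p) ^ (n - (t+1)) * (1-p) := pow_succ _ _
    rw [hexp]
    push_cast
    linear_combination (-((n.choose t : ℝ) * p ^ t * (1-p) ^ (n - (t+1)) * (1-p))) * hnp + (-(p ^ (t+1) * (1-p) ^ (n-(t+1)) * (1-p))) * hc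
  have hsum2 : ∑ t ∈ range (n+1), (n.choose t : ℝ) * p ^ t * (1 - p) ^ (n - t) * (((k - t : ℕ)):ℝ)
      = (k:ℝ) * (1-p) * (n.choose k : ℝ) * p ^ k * (1-p) ^ (n - k) := by
    have hsub : ∑ t ∈ range (n+1), (n.choose t : ℝ) * p ^ t * (1 - p) ^ (n - t) * (((k - t : ℕ)):ℝ)
        = ∑ t ∈ range k, (n.choose t : ℝ) * p ^ t * (1 - p) ^ (n - t) * (((k - t : ℕ)):ℝ) := by
      symm
      apply Finset.sum_subset
      · intro x hx; rw [Finset.mem_range] at *; omega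
      · intro x _ hx
        rw [Finset.mem_range, not_lt] at hx
        have : k - x = 0 := by omega
        rw [this]
        norm_num
    rw [hsub, Finset.sum_congr rfl hterm, Finset.sum_range_sub F k]
    rw [hF]
    simp
  have hbb : ∀ t : ℕ, (n.choose t : ℝ) * p ^ t * (1 - p) ^ (n - t) * ((min t k : ℕ):ℝ)
      = (n.choose t : ℝ) * p ^ t * (1 - p) ^ (n - t) * k
        - (n.choose t : ℝ) * p ^ t * (1 - p) ^ (n - t) * (((k - t : ℕ)):ℝ) := by
    intro t
    have hmin : min t k = k - (k - t) := by omega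
    rw [hmin, Nat.cast_sub (Nat.sub_le k t)]
    ring
  unfold Phi
  rw [← hp]
  rw [Finset.sum_congr rfl (fun t _ => hbb t), Finset.sum_sub_distrib, hsum1, hsum2]

/-- `Phi` is monotonically non-increasing in `n`. -/
theorem phi_antitone_in_n (n k : ℕ) (hk : 1 ≤ k) (hkn : k ≤ n) :
    Phi (n + 1) k ≤ Phi n k := by
  obtain ⟨m, rfl⟩ := Nat.exists_eq_add_of_le hkn
  rw [phi_closed (k+m) k hk (Nat.le_add_right k m),
      phi_closed (k+m+1) k hk (by omega)]
  apply sub_le_sub_left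
  rw [A_eq (k+m) k (Nat.le_add_right k m) (by omega),
      A_eq (k+m+1) k (by omega) (by omega)]
  rw [div_le_div_iff₀ (by positivity) (by positivity)]
  have hsub1 : k + m - k = m := by omega
  have hsub2 : k + m + 1 - k = m + 1 := by omega
  rw [hsub1, hsub2]
  exact_mod_cast nat_main k m
end

section
/- Define Φ(n,k) = E[min(X_{n,k}, k)] where X_{n,k} ~ Binomial(n, k/n). Then Φ(n,k) is monotonically non-decreasing in k: for all integers 1 ≤ k < n, Φ(n, k+1) ≥ Φ(n, k). -/
open Finset Polynomial

theorem sum_range_mul_min_eq_sum_sum_Ioc {R : Type*} [NonAssocSemiring R] (f : ℕ → R) (n k : ℕ) :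
    ∑ t ∈ range (n + 1), f t * (min t k : ℕ) = ∑ j ∈ range k, ∑ t ∈ Ioc j n, f t := by
  induction k with
  | zero => simp
  | succ k ih =>
    have hmin (t : ℕ) : min t (k + 1) = min t k + if k < t then 1 else 0 := by
      split_ifs <;> omega
    have htail : (range (n + 1)).filter (k < ·) = Ioc k n := by
      ext t; simp [and_comm]
    simp only [hmin, Nat.cast_add, Nat.cast_ite, Nat.cast_one, Nat.cast_zero, mul_add, mul_ite,
      mul_one, mul_zero, sum_add_distrib, ih, ← sum_filter, htail, sum_range_succ]

/-- Evaluated at `p`, this is `P(X > j)` for `X ~ Binomial(n, p)`. -/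
noncomputable def binomialTail (R : Type*) [CommRing R] (n j : ℕ) : R[X] :=
  ∑ t ∈ Ioc j n, bernsteinPolynomial R n t

theorem derivative_binomialTail (R : Type*) [CommRing R] (n j : ℕ) :
    derivative (binomialTail R (n + 1) j) = (n + 1 : R[X]) * bernsteinPolynomial R n j := by
  rcases le_or_gt j n with hj | hj
  · rw [binomialTail, ← Ico_add_one_add_one_eq_Ioc, ← sum_Ico_add', derivative_sum]
    simp only [bernsteinPolynomial.derivative_succ, Nat.add_sub_cancel, ← mul_sum]
    have telescope := sum_Ico_sub (fun s => -bernsteinPolynomial R n s) (Nat.le_succ_of_le hj)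
    simp only [sub_neg_eq_add, neg_add_eq_sub] at telescope
    rw [telescope, bernsteinPolynomial.eq_zero_of_lt R (Nat.lt_succ_self n), sub_zero]
    push_cast
    ring
  · rw [binomialTail, Ioc_eq_empty (by omega), bernsteinPolynomial.eq_zero_of_lt R hj]
    simp

section Nonneg

variable {R : Type*} [CommRing R] [LinearOrder R] [IsStrictOrderedRing R] {p : R}

theorem bernsteinPolynomial_eval_nonneg (n ν : ℕ) (hp : p ∈ Set.Icc 0 1) :
    0 ≤ (bernsteinPolynomial R n ν).eval p := by
  have h1p : 0 ≤ 1 - p := sub_nonneg.2 hp.2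
  simp only [bernsteinPolynomial, eval_mul, eval_pow, eval_natCast, eval_X, eval_sub, eval_one]
  exact mul_nonneg (mul_nonneg (Nat.cast_nonneg _) (pow_nonneg hp.1 _)) (pow_nonneg h1p _)

theorem binomialTail_eval_nonneg (n j : ℕ) (hp : p ∈ Set.Icc 0 1) :
    0 ≤ (binomialTail R n j).eval p := by
  rw [binomialTail, eval_finsetSum]
  exact sum_nonneg fun t _ => bernsteinPolynomial_eval_nonneg n t hp

end Nonneg

theorem monotoneOn_binomialTail_eval (n j : ℕ) :
    MonotoneOn (fun p => (binomialTail ℝ n j).eval p) (Set.Icc 0 1) := by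
  cases n with
  | zero =>
    simp only [binomialTail, zero_le, Ioc_eq_empty_of_le, sum_empty, eval_zero, monotoneOn_const]
  | succ n =>
    refine monotoneOn_of_deriv_nonneg (convex_Icc 0 1) (Polynomial.continuousOn _)
      (Polynomial.differentiableOn _) fun p hp => ?_
    rw [interior_Icc] at hp
    rw [Polynomial.deriv, derivative_binomialTail, eval_mul]
    refine mul_nonneg ?_ (bernsteinPolynomial_eval_nonneg n j (Set.Ioo_subset_Icc_self hp))
    simp only [eval_add, eval_natCast, eval_one]
    positivity

theorem Phi_eq_sum_binomialTail (n k : ℕ) :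
    Phi n k = ∑ j ∈ range k, (binomialTail ℝ n j).eval ((k : ℝ) / n) := by
  simp only [Phi, binomialTail, eval_finsetSum, bernsteinPolynomial, eval_mul, eval_pow,
    eval_natCast, eval_X, eval_sub, eval_one]
  exact sum_range_mul_min_eq_sum_sum_Ioc _ n k

theorem phi_monotone_in_k_general (n k : ℕ) (hkn : k < n) :
    Phi n k ≤ Phi n (k + 1) := by
  have hn : (0 : ℝ) < n := by exact_mod_cast k.zero_le.trans_lt hkn
  set p : ℝ := k / n
  set q : ℝ := ((k + 1 : ℕ) : ℝ) / n
  have hp : p ∈ Set.Icc 0 1 := ⟨by positivity, div_le_one_of_le₀ (by exact_mod_cast hkn.le) hn.le⟩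
  have hq : q ∈ Set.Icc 0 1 := ⟨by positivity, div_le_one_of_le₀ (by exact_mod_cast hkn) hn.le⟩
  have hpq : p ≤ q := div_le_div_of_nonneg_right (by exact_mod_cast k.le_succ) hn.le
  rw [Phi_eq_sum_binomialTail, Phi_eq_sum_binomialTail, sum_range_succ]
  calc ∑ j ∈ range k, (binomialTail ℝ n j).eval p
      ≤ ∑ j ∈ range k, (binomialTail ℝ n j).eval q :=
        sum_le_sum fun j _ => monotoneOn_binomialTail_eval n j hp hq hpq
    _ ≤ _ := le_add_of_nonneg_right (binomialTail_eval_nonneg n k hq)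

/-- `Phi` is monotonically non-decreasing in `k`. -/
theorem phi_monotone_in_k (n k : ℕ) (hk : 1 ≤ k) (hkn : k < n) :
    Phi n k ≤ Phi n (k + 1) :=
  phi_monotone_in_k_general n k hkn
end

section
/- Let f(S) = min(|S|, k) on subsets of N = {1,...,n}, and let Ef(q) denote its multilinear extension, i.e., the expectation of f(S) when each element i is independently included in S with probability q_i. Among all probability vectors q ∈ [0,1]^n with Σ_i q_i = k, the vector with all coordinates equal to k/n minimizes Ef(q). -/
open Finset

/-- Multilinear extension of the `k`-uniform rank function `S ↦ min(|S|, k)`. -/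
noncomputable def multilinearRank (n k : ℕ) (q : Fin n → ℝ) : ℝ :=
  ∑ S : Finset (Fin n),
    (min S.card k : ℕ) * ((∏ i ∈ S, q i) * ∏ i ∈ Sᶜ, (1 - q i))

/-!
For `i ≠ j` and the other coordinates fixed, the multilinear extension of `S ↦ g |S|` is
`A (1 - x)(1 - y) + B (x (1 - y) + (1 - x) y) + C x y` in `x = q i`, `y = q j`, where
`A - 2B + C` is an expectation of `g m - 2 g (m + 1) + g (m + 2) ≤ 0` (as `g = min · k` is
concave). Hence for fixed `x + y` it does not increase as `x y` grows. Moving a coordinate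
below the mean `k / n` up to the mean and one above it down by the same amount therefore does
not increase the extension, and after at most `n` such moves `q` is uniform.
-/

theorem Fintype.exists_lt_of_sum_eq_of_ne {ι M : Type*} [Fintype ι] [AddCommMonoid M]
    [LinearOrder M] [IsOrderedCancelAddMonoid M] {f g : ι → M}
    (h : ∑ t, f t = ∑ t, g t) (hne : f ≠ g) : ∃ t, f t < g t := by
  by_contra! hle
  exact hne <| funext fun t =>
    ((sum_eq_sum_iff_of_le fun t _ => hle t).1 h.symm t (mem_univ t)).symm

theorem Fintype.sum_eq_sum_of_pair {ι M : Type*} [Fintype ι] [AddCommGroup M] {f f' : ι → M}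
    {i j : ι} (hij : i ≠ j) (hoff : ∀ t, t ≠ i → t ≠ j → f' t = f t)
    (hsum : f' i + f' j = f i + f j) : ∑ t, f' t = ∑ t, f t := by
  rw [← sub_eq_zero, ← sum_sub_distrib,
    Fintype.sum_eq_add i j hij fun t ⟨hti, htj⟩ => by rw [hoff t hti htj, sub_self],
    ← add_sub_add_comm, hsum, sub_self]

theorem apply_const_le_of_transfer {ι : Type*} [Fintype ι] [DecidableEq ι] {s : Set ℝ}
    (hs : s.OrdConnected) (Φ : (ι → ℝ) → ℝ)
    (hΦ : ∀ q q' : ι → ℝ, (∀ t, q t ∈ s) → ∀ i j, i ≠ j → (∀ t, t ≠ i → t ≠ j → q' t = q t) →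
      q' i + q' j = q i + q j → q i * q j ≤ q' i * q' j → Φ q' ≤ Φ q)
    (c : ℝ) (q : ι → ℝ) (hqs : ∀ t, q t ∈ s) (hsum : ∑ t, q t = Fintype.card ι * c) :
    Φ (fun _ => c) ≤ Φ q := by
  induction hm : #{t | q t ≠ c} using Nat.strong_induction_on generalizing q with
  | _ m ih =>
  by_cases hconst : q = fun _ => c
  · rw [hconst]
  have hsum' : ∑ t, q t = ∑ _t : ι, c := by simp [hsum]
  obtain ⟨i, hi⟩ := Fintype.exists_lt_of_sum_eq_of_ne hsum' hconst
  obtain ⟨j, hj⟩ := Fintype.exists_lt_of_sum_eq_of_ne hsum'.symm (Ne.symm hconst)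
  have hij : i ≠ j := by rintro rfl; linarith
  set q' := Function.update (Function.update q i c) j (q i + q j - c) with hq'
  have hq'i : q' i = c := by simp [hq', hij]
  have hq'j : q' j = q i + q j - c := by simp [hq']
  have hoff : ∀ t, t ≠ i → t ≠ j → q' t = q t := fun t hti htj => by simp [hq', hti, htj]
  have hpair : q' i + q' j = q i + q j := by rw [hq'i, hq'j]; ring
  have hprod : q i * q j ≤ q' i * q' j := by rw [hq'i, hq'j]; nlinarith
  have hq's : ∀ t, q' t ∈ s := by
    intro t
    by_cases hti : t = i
    · subst hti; rw [hq'i]; exact hs.out (hqs t) (hqs j) ⟨hi.le, hj.le⟩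
    by_cases htj : t = j
    · subst htj; rw [hq'j]; exact hs.out (hqs i) (hqs t) ⟨by linarith, by linarith⟩
    rw [hoff t hti htj]; exact hqs t
  have hcard : #{t | q' t ≠ c} < m := by
    rw [← hm]
    refine card_lt_card ((ssubset_iff_of_subset fun t => ?_).2 ⟨i, ?_, ?_⟩)
    · simp only [mem_filter, mem_univ, true_and]
      intro ht
      by_cases hti : t = i
      · exact absurd (hti ▸ hq'i) ht
      by_cases htj : t = j
      · rw [htj]; exact hj.ne'
      rwa [← hoff t hti htj]
    · simpa using hi.ne
    · simp [hq'i]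
  have hq'sum : ∑ t, q' t = Fintype.card ι * c := by
    rw [Fintype.sum_eq_sum_of_pair hij hoff hpair, hsum]
  exact (ih _ hcard q' hq's hq'sum rfl).trans (hΦ q q' hqs i j hij hoff hpair hprod)

section MultilinearExtOfCard

variable {ι : Type*} [DecidableEq ι]

noncomputable def multilinearExtOfCard (s : Finset ι) (g : ℕ → ℝ) (q : ι → ℝ) : ℝ :=
  ∑ S ∈ s.powerset, g #S * ∏ t ∈ s, if t ∈ S then q t else 1 - q t

theorem multilinearExtOfCard_insert {s : Finset ι} {i : ι} (hi : i ∉ s) (g : ℕ → ℝ)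
    (q : ι → ℝ) :
    multilinearExtOfCard (insert i s) g q =
      (1 - q i) * multilinearExtOfCard s g q +
        q i * multilinearExtOfCard s (fun m => g (m + 1)) q := by
  unfold multilinearExtOfCard
  rw [sum_powerset_insert hi, mul_sum, mul_sum, ← sum_add_distrib, ← sum_add_distrib]
  refine sum_congr rfl fun S hS => ?_
  have hiS : i ∉ S := fun h => hi (mem_powerset.1 hS h)
  have hrest : ∏ t ∈ s, (if t ∈ insert i S then q t else 1 - q t) =
      ∏ t ∈ s, if t ∈ S then q t else 1 - q t :=
    prod_congr rfl fun t ht => by simp only [mem_insert, ne_of_mem_of_not_mem ht hi, false_or]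
  rw [prod_insert hi, prod_insert hi, hrest, card_insert_of_notMem hiS]
  simp only [mem_insert_self, if_true, hiS, if_false]
  ring

theorem multilinearExtOfCard_congr {s : Finset ι} {q q' : ι → ℝ} (h : ∀ t ∈ s, q' t = q t)
    (g : ℕ → ℝ) : multilinearExtOfCard s g q' = multilinearExtOfCard s g q := by
  unfold multilinearExtOfCard
  exact sum_congr rfl fun S _ => congrArg _ (prod_congr rfl fun t ht => by rw [h t ht])

theorem multilinearExtOfCard_add_le {s : Finset ι} {q : ι → ℝ} (hq : ∀ t ∈ s, q t ∈ Set.Icc 0 1)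
    {g : ℕ → ℝ} (hg : ∀ m, g m + g (m + 2) ≤ 2 * g (m + 1)) :
    multilinearExtOfCard s g q + multilinearExtOfCard s (fun m => g (m + 2)) q ≤
      2 * multilinearExtOfCard s (fun m => g (m + 1)) q := by
  unfold multilinearExtOfCard
  rw [← sum_add_distrib, mul_sum]
  refine sum_le_sum fun S _ => ?_
  have hw : 0 ≤ ∏ t ∈ s, if t ∈ S then q t else 1 - q t :=
    prod_nonneg fun t ht => by split_ifs <;> linarith [(hq t ht).1, (hq t ht).2]
  rw [← add_mul, ← mul_assoc]
  exact mul_le_mul_of_nonneg_right (hg _) hw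

theorem multilinearExtOfCard_le_of_pair {r : Finset ι} {i j : ι} (hij : i ≠ j) (hi : i ∉ r)
    (hj : j ∉ r) {g : ℕ → ℝ} (hg : ∀ m, g m + g (m + 2) ≤ 2 * g (m + 1)) {q q' : ι → ℝ}
    (hq : ∀ t ∈ r, q t ∈ Set.Icc 0 1) (hoff : ∀ t ∈ r, q' t = q t)
    (hsum : q' i + q' j = q i + q j) (hprod : q i * q j ≤ q' i * q' j) :
    multilinearExtOfCard (insert i (insert j r)) g q' ≤
      multilinearExtOfCard (insert i (insert j r)) g q := by
  have expand : ∀ p : ι → ℝ, multilinearExtOfCard (insert i (insert j r)) g p =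
      (1 - p i) * (1 - p j) * multilinearExtOfCard r g p +
      ((1 - p i) * p j + p i * (1 - p j)) * multilinearExtOfCard r (fun m => g (m + 1)) p +
      p i * p j * multilinearExtOfCard r (fun m => g (m + 2)) p := fun p => by
    rw [multilinearExtOfCard_insert (by simp [hij, hi]), multilinearExtOfCard_insert hj,
      multilinearExtOfCard_insert hj]
    ring
  have hconcave := multilinearExtOfCard_add_le hq hg
  have hj' : q' j = q i + q j - q' i := by linarith
  rw [expand, expand, multilinearExtOfCard_congr hoff, multilinearExtOfCard_congr hoff,
    multilinearExtOfCard_congr hoff, hj']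
  rw [hj'] at hprod
  -- with `y' = x + y - x'`, the difference of the two sides is `(2B - A - C) (x' y' - x y)`
  nlinarith [mul_le_mul_of_nonneg_left hprod (sub_nonneg.2 hconcave)]

end MultilinearExtOfCard

theorem multilinearRank_eq (n k : ℕ) (q : Fin n → ℝ) :
    multilinearRank n k q = multilinearExtOfCard univ (fun m => (min m k : ℕ)) q := by
  unfold multilinearRank multilinearExtOfCard
  rw [powerset_univ]
  refine sum_congr rfl fun S _ => ?_
  rw [prod_ite, filter_mem_eq_inter, filter_notMem_eq_sdiff, univ_inter, compl_eq_univ_sdiff]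

theorem multilinearRank_le_of_transfer (n k : ℕ) {q q' : Fin n → ℝ} (hq : ∀ t, q t ∈ Set.Icc 0 1)
    {i j : Fin n} (hij : i ≠ j) (hoff : ∀ t, t ≠ i → t ≠ j → q' t = q t)
    (hsum : q' i + q' j = q i + q j) (hprod : q i * q j ≤ q' i * q' j) :
    multilinearRank n k q' ≤ multilinearRank n k q := by
  have huniv : (univ : Finset (Fin n)) = insert i (insert j ((univ.erase i).erase j)) := by
    rw [insert_erase (mem_erase.2 ⟨hij.symm, mem_univ j⟩), insert_erase (mem_univ i)]
  rw [multilinearRank_eq, multilinearRank_eq, huniv]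
  refine multilinearExtOfCard_le_of_pair hij (by simp) (by simp) (fun m => ?_)
    (fun t _ => hq t) (fun t ht => hoff t (ne_of_mem_erase (mem_of_mem_erase ht))
      (ne_of_mem_erase ht)) hsum hprod
  exact_mod_cast (by omega : min m k + min (m + 2) k ≤ 2 * min (m + 1) k)

theorem uniform_minimizes_multilinear_general (n k : ℕ)
    (q : Fin n → ℝ) (hq0 : ∀ i, 0 ≤ q i) (hq1 : ∀ i, q i ≤ 1)
    (hsum : ∑ i, q i = (k : ℝ)) :
    multilinearRank n k (fun _ => (k : ℝ) / n) ≤ multilinearRank n k q := by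
  refine apply_const_le_of_transfer Set.ordConnected_Icc (multilinearRank n k)
    (fun _ _ hq _ _ => multilinearRank_le_of_transfer n k hq) _ q (fun t => ⟨hq0 t, hq1 t⟩) ?_
  rcases eq_or_ne n 0 with rfl | hn
  · simp
  · rw [hsum, Fintype.card_fin]; field_simp

/-- Among all probability vectors with coordinate sum `k`, the uniform vector
`(k/n, …, k/n)` minimizes the multilinear extension of `S ↦ min(|S|, k)`. -/
theorem uniform_minimizes_multilinear (n k : ℕ) (hk : 1 ≤ k) (hkn : k ≤ n)
    (q : Fin n → ℝ) (hq0 : ∀ i, 0 ≤ q i) (hq1 : ∀ i, q i ≤ 1)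
    (hsum : ∑ i, q i = (k : ℝ)) :
    multilinearRank n k (fun _ => (k : ℝ) / n) ≤ multilinearRank n k q :=
  uniform_minimizes_multilinear_general n k q hq0 hq1 hsum
end

section
/- The correlation gap of a monotone submodular function f: 2^N → [0,∞) is at most e/(e-1): for any distribution D on 2^N with marginals q_i = Pr_{S~D}[i ∈ S], the expectation of f over the independent distribution with the same marginals is at least (1 - 1/e) times E_{S~D}[f(S)]. -/
/-!
Discretised continuous greedy. Let `F` be the multilinear extension of `f`, `c = E_D[f]` and
`N = |α|`. Submodularity gives `c ≤ f R + ∑ᵢ qᵢ (f (R + i) - f R)` for every `R`. Adding to a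
random `R` an independent sample with marginals `q / m` hits each singleton `{i}` with
probability at least `(qᵢ / m)(1 - N / m)`, so it closes a `β = (1 - N / m) / m` fraction of the
gap `c - f R`. After `m` such steps, starting from `∅`, the marginals are
`1 - (1 - q / m)^m ≤ q`, hence `F q ≥ (1 - (1 - β)^m) c ≥ (1 - e^{-(1 - N/m)}) c`; let `m → ∞`.
-/

open Finset

/-- The marginal probability of element `i` under a distribution `D` on `2^N`. -/
noncomputable def marginal {n : ℕ} (D : Finset (Fin n) → ℝ) (i : Fin n) : ℝ :=
  ∑ S ∈ Finset.univ.filter (fun S : Finset (Fin n) => i ∈ S), D S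

/-- Expectation of `f` when each element `i` is included independently with
probability `q i`. -/
noncomputable def indepExp {n : ℕ} (q : Fin n → ℝ) (f : Finset (Fin n) → ℝ) : ℝ :=
  ∑ S : Finset (Fin n), ((∏ i ∈ S, q i) * ∏ i ∈ Sᶜ, (1 - q i)) * f S

section MultilinearExtension

variable {α : Type*} [DecidableEq α]

noncomputable def multilinearExt (T : Finset α) (x : α → ℝ) (g : Finset α → ℝ) : ℝ :=
  ∑ S ∈ T.powerset, ((∏ i ∈ S, x i) * ∏ i ∈ T \ S, (1 - x i)) * g S

variable {T : Finset α} {x : α → ℝ}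

@[simp]
lemma multilinearExt_empty (x : α → ℝ) (g : Finset α → ℝ) : multilinearExt ∅ x g = g ∅ := by
  simp [multilinearExt]

lemma multilinearExt_insert {a : α} (ha : a ∉ T) (x : α → ℝ) (g : Finset α → ℝ) :
    multilinearExt (insert a T) x g =
      x a * multilinearExt T x (fun S => g (insert a S)) + (1 - x a) * multilinearExt T x g := by
  rw [multilinearExt, sum_powerset_insert ha, add_comm, multilinearExt, multilinearExt,
    mul_sum, mul_sum]
  congr 1 <;> refine sum_congr rfl fun S hS => ?_
  · have haS : a ∉ S := fun h => ha (mem_powerset.1 hS h)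
    rw [insert_sdiff_insert, sdiff_insert_of_notMem ha, prod_insert haS]
    ring
  · have haS : a ∉ S := fun h => ha (mem_powerset.1 hS h)
    rw [insert_sdiff_of_notMem _ haS, prod_insert (fun h => ha (mem_sdiff.1 h).1)]
    ring

lemma multilinearExt_add (T : Finset α) (x : α → ℝ) (u v : Finset α → ℝ) :
    multilinearExt T x (fun S => u S + v S) = multilinearExt T x u + multilinearExt T x v := by
  simp only [multilinearExt, mul_add, sum_add_distrib]

lemma multilinearExt_const_mul (T : Finset α) (x : α → ℝ) (c : ℝ) (u : Finset α → ℝ) :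
    multilinearExt T x (fun S => c * u S) = c * multilinearExt T x u := by
  simp only [multilinearExt, mul_sum]
  exact sum_congr rfl fun S _ => by ring

lemma multilinearExt_const (T : Finset α) (x : α → ℝ) (c : ℝ) :
    multilinearExt T x (fun _ => c) = c := by
  have hweights : ∏ i ∈ T, (x i + (1 - x i)) = 1 := prod_eq_one fun i _ => by ring
  rw [multilinearExt, ← sum_mul, ← prod_add, hweights, one_mul]

@[simp]
lemma multilinearExt_zero (T : Finset α) (g : Finset α → ℝ) :
    multilinearExt T (fun _ => 0) g = g ∅ := by
  induction T using Finset.induction_on with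
  | empty => simp
  | insert a T ha ih => simp [multilinearExt_insert ha, ih]

lemma multilinearExt_mono (hx0 : ∀ i, 0 ≤ x i) (hx1 : ∀ i, x i ≤ 1) {g h : Finset α → ℝ}
    (hgh : ∀ S, g S ≤ h S) : multilinearExt T x g ≤ multilinearExt T x h :=
  sum_le_sum fun S _ => mul_le_mul_of_nonneg_left (hgh S) <|
    mul_nonneg (prod_nonneg fun i _ => hx0 i) (prod_nonneg fun i _ => sub_nonneg.2 (hx1 i))

lemma Monotone.multilinearExt_le {g : Finset α → ℝ} (hg : Monotone g) {y : α → ℝ}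
    (hx0 : ∀ i, 0 ≤ x i) (hxy : ∀ i, x i ≤ y i) (hy1 : ∀ i, y i ≤ 1) :
    multilinearExt T x g ≤ multilinearExt T y g := by
  induction T using Finset.induction_on generalizing g with
  | empty => simp
  | insert a T ha ih =>
    have hins : Monotone fun S => g (insert a S) := fun S S' h => hg (insert_subset_insert a h)
    have hy0 i : 0 ≤ y i := (hx0 i).trans (hxy i)
    have hgap : multilinearExt T y g ≤ multilinearExt T y (fun S => g (insert a S)) :=
      multilinearExt_mono hy0 hy1 fun S => hg (subset_insert a S)
    rw [multilinearExt_insert ha, multilinearExt_insert ha]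
    linarith [mul_le_mul_of_nonneg_left (ih hins) (hx0 a),
      mul_le_mul_of_nonneg_left (ih hg) (sub_nonneg.2 ((hxy a).trans (hy1 a))),
      mul_le_mul_of_nonneg_right (hxy a) (sub_nonneg.2 hgap)]

lemma multilinearExt_union (T : Finset α) (x d : α → ℝ) (g : Finset α → ℝ) :
    multilinearExt T (fun i => x i + d i - x i * d i) g =
      multilinearExt T x (fun R => multilinearExt T d (fun N => g (R ∪ N))) := by
  induction T using Finset.induction_on generalizing g with
  | empty => simp
  | insert a T ha ih =>
    simp only [multilinearExt_insert ha, insert_union, union_insert, insert_idem,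
      multilinearExt_add, multilinearExt_const_mul, ih]
    ring

lemma le_multilinearExt_union_of_forall_le (hx0 : ∀ i, 0 ≤ x i) (hx1 : ∀ i, x i ≤ 1)
    {d : α → ℝ} {g : Finset α → ℝ} {β c : ℝ}
    (h : ∀ R, (1 - β) * g R + β * c ≤ multilinearExt T d (fun N => g (R ∪ N))) :
    (1 - β) * multilinearExt T x g + β * c ≤
      multilinearExt T (fun i => x i + d i - x i * d i) g := by
  rw [multilinearExt_union, ← multilinearExt_const T x (β * c), ← multilinearExt_const_mul,
    ← multilinearExt_add]
  exact multilinearExt_mono hx0 hx1 h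

end MultilinearExtension

section SetFunction

variable {α : Type*} [DecidableEq α] {f : Finset α → ℝ}

lemma submodular_union_le (hsub : ∀ S T, f (S ∪ T) + f (S ∩ T) ≤ f S + f T) (R S : Finset α) :
    f (R ∪ S) ≤ f R + ∑ i ∈ S, (f (insert i R) - f R) := by
  induction S using Finset.induction_on with
  | empty => simp
  | insert a S ha ih =>
    have hunion : (R ∪ S) ∪ insert a R = insert a (R ∪ S) := by grind
    have hinter : (R ∪ S) ∩ insert a R = R := by grind
    have := hsub (R ∪ S) (insert a R)
    rw [hunion, hinter] at this
    rw [union_insert, sum_insert ha]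
    linarith

lemma Monotone.add_mul_sum_le_multilinearExt_union (hf : Monotone f) {δ : α → ℝ}
    (hδ0 : ∀ i, 0 ≤ δ i) (hδ1 : ∀ i, δ i ≤ 1) (T R : Finset α) :
    f R + (1 - ∑ i ∈ T, δ i) * ∑ i ∈ T, δ i * (f (insert i R) - f R) ≤
      multilinearExt T δ (fun N => f (R ∪ N)) := by
  induction T using Finset.induction_on with
  | empty => simp
  | insert a T ha ih =>
    have hgain : f (insert a R) ≤ multilinearExt T δ (fun N => f (R ∪ insert a N)) := by
      rw [← multilinearExt_const T δ (f (insert a R))]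
      exact multilinearExt_mono hδ0 hδ1 fun N => hf (by simp [union_insert])
    have hs : 0 ≤ ∑ i ∈ T, δ i := sum_nonneg fun i _ => hδ0 i
    have hΔ i : 0 ≤ f (insert i R) - f R := sub_nonneg.2 (hf (subset_insert i R))
    have ht : 0 ≤ ∑ i ∈ T, δ i * (f (insert i R) - f R) :=
      sum_nonneg fun i _ => mul_nonneg (hδ0 i) (hΔ i)
    rw [multilinearExt_insert ha, sum_insert ha, sum_insert ha]
    linarith [mul_le_mul_of_nonneg_left ih (sub_nonneg.2 (hδ1 a)),
      mul_le_mul_of_nonneg_left hgain (hδ0 a), mul_nonneg (mul_nonneg (hδ0 a) (hΔ a)) hs,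
      mul_nonneg (mul_nonneg (hδ0 a) (hΔ a)) (hδ0 a), mul_nonneg (mul_nonneg (hδ0 a) hs) ht]

end SetFunction

section Marginal

variable {n : ℕ} {D : Finset (Fin n) → ℝ}

lemma marginal_nonneg (hD0 : ∀ S, 0 ≤ D S) (i : Fin n) : 0 ≤ marginal D i :=
  sum_nonneg fun S _ => hD0 S

lemma marginal_le_one (hD0 : ∀ S, 0 ≤ D S) (hD1 : ∑ S, D S = 1) (i : Fin n) :
    marginal D i ≤ 1 :=
  hD1 ▸ sum_le_sum_of_subset_of_nonneg (filter_subset _ _) fun S _ _ => hD0 S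

lemma sum_mul_sum_eq_sum_marginal_mul (D : Finset (Fin n) → ℝ) (c : Fin n → ℝ) :
    ∑ S, D S * ∑ i ∈ S, c i = ∑ i, marginal D i * c i := by
  simp only [marginal, mul_sum, sum_mul]
  exact sum_comm' fun S i => by simp

lemma sum_mul_le_add_sum_marginal_mul {f : Finset (Fin n) → ℝ} (hf : Monotone f)
    (hsub : ∀ S T, f (S ∪ T) + f (S ∩ T) ≤ f S + f T) (hD0 : ∀ S, 0 ≤ D S)
    (hD1 : ∑ S, D S = 1) (R : Finset (Fin n)) :
    ∑ S, D S * f S ≤ f R + ∑ i, marginal D i * (f (insert i R) - f R) :=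
  calc ∑ S, D S * f S ≤ ∑ S, D S * (f R + ∑ i ∈ S, (f (insert i R) - f R)) :=
        sum_le_sum fun S _ => mul_le_mul_of_nonneg_left
          ((hf subset_union_right).trans (submodular_union_le hsub R S)) (hD0 S)
    _ = f R + ∑ i, marginal D i * (f (insert i R) - f R) := by
        rw [← sum_mul_sum_eq_sum_marginal_mul]
        simp only [mul_add, sum_add_distrib, ← sum_mul, hD1, one_mul]

lemma indepExp_eq_multilinearExt (q : Fin n → ℝ) (f : Finset (Fin n) → ℝ) :
    indepExp q f = multilinearExt univ q f := by
  simp only [indepExp, multilinearExt, powerset_univ, compl_eq_univ_sdiff]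

end Marginal

lemma one_sub_pow_mul_le_of_le_succ {a : ℕ → ℝ} {β c : ℝ} (hβ : β ≤ 1) (h0 : 0 ≤ a 0)
    (hstep : ∀ k, (1 - β) * a k + β * c ≤ a (k + 1)) (k : ℕ) :
    (1 - (1 - β) ^ k) * c ≤ a k := by
  induction k with
  | zero => simpa using h0
  | succ k ih =>
    calc (1 - (1 - β) ^ (k + 1)) * c = (1 - β) * ((1 - (1 - β) ^ k) * c) + β * c := by ring
      _ ≤ (1 - β) * a k + β * c := by gcongr
      _ ≤ a (k + 1) := hstep k

section CorrelationGap

variable {α : Type*} [Fintype α] [DecidableEq α] {f : Finset α → ℝ} {q : α → ℝ} {c : ℝ}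

lemma Monotone.le_multilinearExt_union_mul (hf : Monotone f) (hq0 : ∀ i, 0 ≤ q i)
    (hq1 : ∀ i, q i ≤ 1) (hc : ∀ R, c ≤ f R + ∑ i, q i * (f (insert i R) - f R)) {ε : ℝ}
    (hε0 : 0 ≤ ε) (hε1 : ε ≤ 1) (hεcard : ε * Fintype.card α ≤ 1) (R : Finset α) :
    (1 - ε * (1 - ε * Fintype.card α)) * f R + ε * (1 - ε * Fintype.card α) * c ≤
      multilinearExt univ (fun i => ε * q i) (fun N => f (R ∪ N)) := by
  have hgain := hf.add_mul_sum_le_multilinearExt_union (fun i => mul_nonneg hε0 (hq0 i))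
    (fun i => mul_le_one₀ hε1 (hq0 i) (hq1 i)) univ R
  simp only [mul_assoc, ← mul_sum] at hgain
  have ht : 0 ≤ ∑ i, q i * (f (insert i R) - f R) :=
    sum_nonneg fun i _ => mul_nonneg (hq0 i) (sub_nonneg.2 (hf (subset_insert i R)))
  have hs : ∑ i, q i ≤ Fintype.card α := by
    simpa using sum_le_sum fun i (_ : i ∈ univ) => hq1 i
  linarith [mul_le_mul_of_nonneg_left (hc R) (mul_nonneg hε0 (sub_nonneg.2 hεcard)),
    mul_nonneg (mul_nonneg hε0 (sub_nonneg.2 hs)) (mul_nonneg hε0 ht)]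

lemma Monotone.one_sub_pow_mul_le_multilinearExt_one_sub_pow (hf : Monotone f)
    (hq0 : ∀ i, 0 ≤ q i) (hq1 : ∀ i, q i ≤ 1) (hf0 : 0 ≤ f ∅)
    (hc : ∀ R, c ≤ f R + ∑ i, q i * (f (insert i R) - f R)) {ε : ℝ} (hε0 : 0 ≤ ε) (hε1 : ε ≤ 1)
    (hεcard : ε * Fintype.card α ≤ 1) (k : ℕ) :
    (1 - (1 - ε * (1 - ε * Fintype.card α)) ^ k) * c ≤
      multilinearExt univ (fun i => 1 - (1 - ε * q i) ^ k) f := by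
  have hεq0 i : 0 ≤ 1 - ε * q i := sub_nonneg.2 (mul_le_one₀ hε1 (hq0 i) (hq1 i))
  have hεq1 i : 1 - ε * q i ≤ 1 := sub_le_self _ (mul_nonneg hε0 (hq0 i))
  refine one_sub_pow_mul_le_of_le_succ
    (a := fun k => multilinearExt univ (fun i => 1 - (1 - ε * q i) ^ k) f) (by nlinarith) (by simpa using hf0) (fun k => ?_) k
  have hsucc : (fun i => 1 - (1 - ε * q i) ^ (k + 1)) = fun i =>
      (1 - (1 - ε * q i) ^ k) + ε * q i - (1 - (1 - ε * q i) ^ k) * (ε * q i) := by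
    funext i
    ring
  rw [hsucc]
  exact le_multilinearExt_union_of_forall_le
    (fun i => sub_nonneg.2 (pow_le_one₀ (hεq0 i) (hεq1 i))) (fun i => sub_le_self _ (pow_nonneg (hεq0 i) k))
    (hf.le_multilinearExt_union_mul hq0 hq1 hc hε0 hε1 hεcard)

open Real Filter Topology in
theorem Monotone.one_sub_exp_neg_one_mul_le_multilinearExt (hf : Monotone f)
    (hq0 : ∀ i, 0 ≤ q i) (hq1 : ∀ i, q i ≤ 1) (hf0 : 0 ≤ f ∅) (hc0 : 0 ≤ c)
    (hc : ∀ R, c ≤ f R + ∑ i, q i * (f (insert i R) - f R)) :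
    (1 - exp (-1)) * c ≤ multilinearExt univ q f := by
  have hlim : Tendsto (fun m : ℕ => (1 - exp (-(1 - Fintype.card α / m))) * c) atTop
      (𝓝 ((1 - exp (-1)) * c)) := by
    simpa using (((tendsto_const_div_atTop_nhds_zero_nat (Fintype.card α : ℝ)).const_sub 1
      ).neg.rexp.const_sub 1).mul_const c
  refine _root_.le_of_tendsto hlim ?_
  filter_upwards [eventually_ge_atTop (max (Fintype.card α) 1)] with m hm
  have hm1 : (1 : ℝ) ≤ m := by exact_mod_cast (le_max_right _ _).trans hm
  have hm0 : (0 : ℝ) < m := one_pos.trans_le hm1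
  have hcard : (Fintype.card α : ℝ) ≤ m := by exact_mod_cast (le_max_left _ _).trans hm
  have hεcard : (m : ℝ)⁻¹ * Fintype.card α ≤ 1 := by
    rw [inv_mul_le_iff₀ hm0]
    linarith
  have hεq0 i : 0 ≤ (m : ℝ)⁻¹ * q i := mul_nonneg (inv_nonneg.2 hm0.le) (hq0 i)
  have hεq1 i : (m : ℝ)⁻¹ * q i ≤ 1 := mul_le_one₀ (Nat.cast_inv_le_one m) (hq0 i) (hq1 i)
  have hbernoulli i : 1 - (1 - (m : ℝ)⁻¹ * q i) ^ m ≤ q i := by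
    have := one_add_mul_le_pow (a := -((m : ℝ)⁻¹ * q i)) (by linarith [hεq1 i]) m
    rw [mul_neg, mul_inv_cancel_left₀ hm0.ne', ← sub_eq_add_neg, ← sub_eq_add_neg] at this
    linarith
  calc (1 - exp (-(1 - Fintype.card α / m))) * c
      ≤ (1 - (1 - (m : ℝ)⁻¹ * (1 - (m : ℝ)⁻¹ * Fintype.card α)) ^ m) * c := by
        gcongr
        rw [show (m : ℝ)⁻¹ * (1 - (m : ℝ)⁻¹ * Fintype.card α) = (1 - Fintype.card α / m) / m by
          ring]
        have : (0 : ℝ) ≤ Fintype.card α / m := by positivity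
        exact one_sub_div_pow_le_exp_neg (by linarith)
    _ ≤ multilinearExt univ (fun i => 1 - (1 - (m : ℝ)⁻¹ * q i) ^ m) f :=
        hf.one_sub_pow_mul_le_multilinearExt_one_sub_pow hq0 hq1 hf0 hc (by positivity)
          (Nat.cast_inv_le_one m) hεcard m
    _ ≤ multilinearExt univ q f := hf.multilinearExt_le
        (fun i => sub_nonneg.2 (pow_le_one₀ (sub_nonneg.2 (hεq1 i)) (sub_le_self _ (hεq0 i))))
        hbernoulli hq1

end CorrelationGap

/-- The correlation gap of a monotone submodular nonnegative set function is at
most `e/(e-1)`: the independent expectation with matching marginals is at least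
`(1 - 1/e)` times the correlated expectation. -/
theorem correlation_gap_submodular {n : ℕ} (f : Finset (Fin n) → ℝ)
    (hnonneg : ∀ S, 0 ≤ f S)
    (hmono : ∀ S T : Finset (Fin n), S ⊆ T → f S ≤ f T)
    (hsub : ∀ S T : Finset (Fin n), f (S ∪ T) + f (S ∩ T) ≤ f S + f T)
    (D : Finset (Fin n) → ℝ)
    (hD0 : ∀ S, 0 ≤ D S) (hD1 : ∑ S : Finset (Fin n), D S = 1) :
    (1 - 1 / Real.exp 1) * (∑ S : Finset (Fin n), D S * f S) ≤
      indepExp (marginal D) f := by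
  have hf : Monotone f := fun S T h => hmono S T h
  rw [one_div, ← Real.exp_neg, indepExp_eq_multilinearExt]
  exact hf.one_sub_exp_neg_one_mul_le_multilinearExt (marginal_nonneg hD0)
    (marginal_le_one hD0 hD1) (hnonneg ∅) (sum_nonneg fun S _ => mul_nonneg (hD0 S) (hnonneg S))
    (sum_mul_le_add_sum_marginal_mul hf hsub hD0 hD1)
end

section
/- For a k-uniform matroid with rank function f(S) = min(|S|,k) and any marginal probability vector q ∈ [0,1]^n, the maximum over distributions D with marginals q of E_{S~D}[f(S)] equals min(Σ_i q_i, k). -/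
/-!
The upper bound holds for every `D`: `min (#S) k` is at most both `#S` and `k`, and by double
counting `E[#S] = ∑ i, q i`. For the lower bound we round `q` to a distribution whose support
consists of sets of size within `1` of `σ = ∑ i, q i`, that is of size `⌊σ⌋` or `⌈σ⌉`; then either
all these sizes are `≤ k` or all are `≥ k`, so `E[min (#S) k] = min σ k`. The rounding is pipage
rounding: while two coordinates `i ≠ j` are fractional, `q` is a convex combination of the two points
where the line `q + ℝ (eᵢ - eⱼ)` leaves `[0,1]^ι`; both keep the sum `σ` and have fewer fractional
coordinates. With at most one fractional coordinate, `q` is a mixture of at most two indicator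
vectors of sets of sizes `⌊σ⌋` and `⌈σ⌉`.
-/

open Finset

variable {ι : Type*}

structure HasMarginals [Fintype ι] [DecidableEq ι] (D : Finset ι → ℝ) (q : ι → ℝ) : Prop where
  nonneg : ∀ S, 0 ≤ D S
  sum_eq_one : ∑ S, D S = 1
  marginal_eq : ∀ i, ∑ S ∈ univ.filter (fun S => i ∈ S), D S = q i

def SupportCardNear (D : Finset ι → ℝ) (σ : ℝ) : Prop :=
  ∀ S, D S ≠ 0 → |(#S : ℝ) - σ| < 1

noncomputable def fracSupport [Fintype ι] (q : ι → ℝ) : Finset ι :=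
  univ.filter fun i => q i ∈ Set.Ioo 0 1

/-- For `q ∈ [0,1]^ι`, the point where the ray `q + t (eᵢ - eⱼ)`, `t ≥ 0`, exits the cube. -/
def transfer [DecidableEq ι] (q : ι → ℝ) (i j : ι) : ι → ℝ :=
  q + Pi.single i (min (1 - q i) (q j)) - Pi.single j (min (1 - q i) (q j))

namespace HasMarginals

variable [Fintype ι] [DecidableEq ι] {D D₁ D₂ : Finset ι → ℝ} {q q₁ q₂ : ι → ℝ}

theorem sum_mul_card (hD : HasMarginals D q) : ∑ S, D S * #S = ∑ i, q i := by
  simp_rw [← hD.marginal_eq, sum_filter]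
  rw [sum_comm]
  refine sum_congr rfl fun S _ => ?_
  rw [sum_ite_mem, univ_inter, sum_const, nsmul_eq_mul, mul_comm]

theorem mix (h₁ : HasMarginals D₁ q₁) (h₂ : HasMarginals D₂ q₂) {t : ℝ} (ht₀ : 0 ≤ t)
    (ht₁ : t ≤ 1) : HasMarginals (t • D₁ + (1 - t) • D₂) (t • q₁ + (1 - t) • q₂) where
  nonneg S :=
    add_nonneg (mul_nonneg ht₀ (h₁.nonneg S)) (mul_nonneg (sub_nonneg.2 ht₁) (h₂.nonneg S))
  sum_eq_one := by
    simp only [Pi.add_apply, Pi.smul_apply, smul_eq_mul, sum_add_distrib, ← mul_sum,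
      h₁.sum_eq_one, h₂.sum_eq_one]
    ring
  marginal_eq i := by
    simp only [Pi.add_apply, Pi.smul_apply, smul_eq_mul, sum_add_distrib, ← mul_sum,
      h₁.marginal_eq, h₂.marginal_eq]

theorem single (S : Finset ι) :
    HasMarginals (Pi.single S 1) (fun i => if i ∈ S then 1 else 0) where
  nonneg T := by rw [Pi.single_apply]; split_ifs <;> norm_num
  sum_eq_one := by simp
  marginal_eq i := by simp [Pi.single_apply]

theorem sum_mul_min_card_le (hD : HasMarginals D q) (k : ℕ) :
    ∑ S, D S * ((min #S k : ℕ) : ℝ) ≤ min (∑ i, q i) k := by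
  refine le_min ?_ ?_
  · calc _ ≤ ∑ S, D S * #S := sum_le_sum fun S _ =>
          mul_le_mul_of_nonneg_left (by exact_mod_cast min_le_left _ _) (hD.nonneg S)
      _ = _ := hD.sum_mul_card
  · calc _ ≤ ∑ S, D S * k := sum_le_sum fun S _ =>
          mul_le_mul_of_nonneg_left (by exact_mod_cast min_le_right _ _) (hD.nonneg S)
      _ = k := by rw [← sum_mul, hD.sum_eq_one, one_mul]

theorem sum_mul_min_card_eq (hD : HasMarginals D q)
    (hnear : SupportCardNear D (∑ i, q i)) (k : ℕ) :
    ∑ S, D S * ((min #S k : ℕ) : ℝ) = min (∑ i, q i) k := by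
  rcases le_total (∑ i, q i) k with h | h
  · rw [min_eq_left h, ← hD.sum_mul_card]
    refine sum_congr rfl fun S _ => ?_
    rcases eq_or_ne (D S) 0 with hS | hS
    · simp [hS]
    · have hlt : (#S : ℝ) < k + 1 := by linarith [(abs_lt.1 (hnear S hS)).2]
      rw [min_eq_left (Nat.le_of_lt_succ (by exact_mod_cast hlt))]
  · rw [min_eq_right h, ← one_mul (k : ℝ), ← hD.sum_eq_one, sum_mul]
    refine sum_congr rfl fun S _ => ?_
    rcases eq_or_ne (D S) 0 with hS | hS
    · simp [hS]
    · have hlt : (k : ℝ) < #S + 1 := by linarith [(abs_lt.1 (hnear S hS)).1]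
      rw [min_eq_right (Nat.le_of_lt_succ (by exact_mod_cast hlt))]

end HasMarginals

namespace SupportCardNear

variable {D₁ D₂ : Finset ι → ℝ} {σ : ℝ}

theorem mix (h₁ : SupportCardNear D₁ σ) (h₂ : SupportCardNear D₂ σ) (t : ℝ) :
    SupportCardNear (t • D₁ + (1 - t) • D₂) σ := by
  intro S hS
  by_cases h : D₁ S = 0
  · exact h₂ S fun h' => hS (by simp [h, h'])
  · exact h₁ S h

theorem single [DecidableEq ι] {S : Finset ι} (hS : |(#S : ℝ) - σ| < 1) :
    SupportCardNear (Pi.single S 1) σ := by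
  intro T hT
  rw [Pi.single_apply] at hT
  split_ifs at hT with h
  · exact h ▸ hS
  · exact absurd rfl hT

end SupportCardNear

section fracSupport

variable [Fintype ι] {q : ι → ℝ} {i j : ι}

@[simp]
theorem mem_fracSupport : i ∈ fracSupport q ↔ q i ∈ Set.Ioo 0 1 := by
  simp [fracSupport]

theorem eq_zero_or_eq_one_of_notMem_fracSupport (hq : q i ∈ Set.Icc 0 1)
    (h : i ∉ fracSupport q) : q i = 0 ∨ q i = 1 := by
  rw [mem_fracSupport, Set.mem_Ioo, not_and_or, not_lt, not_lt] at h
  rcases h with h | h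
  · exact .inl (le_antisymm h hq.1)
  · exact .inr (le_antisymm hq.2 h)

theorem exists_eq_indicator_of_fracSupport_eq_empty [DecidableEq ι] (hq : ∀ l, q l ∈ Set.Icc 0 1)
    (h : fracSupport q = ∅) : ∃ S : Finset ι, q = fun l => if l ∈ S then 1 else 0 := by
  refine ⟨univ.filter fun l => q l = 1, funext fun l => ?_⟩
  rcases eq_zero_or_eq_one_of_notMem_fracSupport (hq l) (h ▸ notMem_empty l) with h | h <;>
    simp [h]

end fracSupport

section transfer

variable [DecidableEq ι] {q : ι → ℝ} {i j : ι}

theorem transfer_apply (hij : i ≠ j) (l : ι) :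
    transfer q i j l = if l = i then q i + min (1 - q i) (q j)
      else if l = j then q j - min (1 - q i) (q j) else q l := by
  rcases eq_or_ne l i with rfl | hli
  · simp [transfer, hij]
  rcases eq_or_ne l j with rfl | hlj
  · simp [transfer, hli]
  · simp [transfer, hli, hlj]

theorem sum_transfer [Fintype ι] : ∑ l, transfer q i j l = ∑ l, q l := by
  simp [transfer, sum_sub_distrib, sum_add_distrib]

theorem transfer_mem_Icc (hij : i ≠ j) (hq : ∀ l, q l ∈ Set.Icc 0 1) (l : ι) :
    transfer q i j l ∈ Set.Icc 0 1 := by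
  have ha₀ : 0 ≤ min (1 - q i) (q j) := le_min (by linarith [(hq i).2]) (hq j).1
  have ha₁ := min_le_left (1 - q i) (q j)
  have ha₂ := min_le_right (1 - q i) (q j)
  rw [transfer_apply hij]
  split_ifs with hli hlj
  · constructor <;> linarith [(hq i).1]
  · constructor <;> linarith [(hq j).2]
  · exact hq l

theorem fracSupport_transfer_ssubset [Fintype ι] (hij : i ≠ j) (hi : i ∈ fracSupport q)
    (hj : j ∈ fracSupport q) : fracSupport (transfer q i j) ⊂ fracSupport q := by
  rw [mem_fracSupport] at hi hj
  refine ssubset_iff_of_subset (fun l hl => ?_) |>.2 ?_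
  · rw [mem_fracSupport, transfer_apply hij] at hl
    split_ifs at hl with hli hlj
    · exact hli ▸ mem_fracSupport.2 hi
    · exact hlj ▸ mem_fracSupport.2 hj
    · exact mem_fracSupport.2 hl
  · rcases min_choice (1 - q i) (q j) with h | h
    · exact ⟨i, mem_fracSupport.2 hi, by simp [transfer_apply hij, h]⟩
    · exact ⟨j, mem_fracSupport.2 hj, by simp [transfer_apply hij, hij.symm, h]⟩

theorem exists_eq_mix_transfer (hij : i ≠ j) (hi : q i ∈ Set.Ioo 0 1) (hj : q j ∈ Set.Ioo 0 1) :
    ∃ t ∈ Set.Icc (0 : ℝ) 1, q = t • transfer q i j + (1 - t) • transfer q j i := by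
  set a := min (1 - q i) (q j)
  set b := min (1 - q j) (q i)
  have ha₀ : 0 < a := lt_min (by linarith [hi.2]) hj.1
  have hb₀ : 0 < b := lt_min (by linarith [hj.2]) hi.1
  refine ⟨b / (a + b), ⟨by positivity, (div_le_one (by positivity)).2 (by linarith)⟩, ?_⟩
  funext l
  simp only [Pi.add_apply, Pi.smul_apply, smul_eq_mul, transfer_apply hij, transfer_apply hij.symm]
  rcases eq_or_ne l i with rfl | hli
  · simp only [if_pos, if_neg hij]
    field_simp
    ring
  rcases eq_or_ne l j with rfl | hlj
  · simp only [if_pos, if_neg hli]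
    field_simp
    ring
  · simp only [if_neg hli, if_neg hlj]
    field_simp
    ring

end transfer

section rounding

variable [Fintype ι] [DecidableEq ι] {q : ι → ℝ}

theorem exists_hasMarginals_of_fracSupport_eq_empty (hq : ∀ l, q l ∈ Set.Icc 0 1)
    (h : fracSupport q = ∅) : ∃ D, HasMarginals D q ∧ SupportCardNear D (∑ l, q l) := by
  obtain ⟨S, rfl⟩ := exists_eq_indicator_of_fracSupport_eq_empty hq h
  exact ⟨_, .single S, .single (by simp)⟩

theorem exists_hasMarginals_of_fracSupport_eq_singleton {i : ι} (hq : ∀ l, q l ∈ Set.Icc 0 1)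
    (h : fracSupport q = {i}) : ∃ D, HasMarginals D q ∧ SupportCardNear D (∑ l, q l) := by
  have hi : q i ∈ Set.Ioo 0 1 := mem_fracSupport.1 (h ▸ mem_singleton_self i)
  set S := univ.filter fun l => q l = 1
  have hiS : i ∉ S := by simp [S, hi.2.ne]
  have hq_eq : q = q i • (fun l => if l ∈ insert i S then 1 else 0) +
      (1 - q i) • fun l => if l ∈ S then 1 else 0 := by
    funext l
    rcases eq_or_ne l i with rfl | hl
    · simp [hiS]
    rcases eq_zero_or_eq_one_of_notMem_fracSupport (hq l) (by simp [h, hl]) with h' | h' <;>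
      simp [S, hl, h']
  have hsum : ∑ l, q l = #S + q i := by
    conv_lhs => rw [hq_eq]
    simp only [Pi.add_apply, Pi.smul_apply, smul_eq_mul, sum_add_distrib, ← mul_sum, sum_boole,
      filter_mem_eq_inter, univ_inter, card_insert_of_notMem hiS]
    push_cast
    ring
  refine ⟨q i • Pi.single (insert i S) 1 + (1 - q i) • Pi.single S 1, ?_, ?_⟩
  · have := (HasMarginals.single (insert i S)).mix (.single S) hi.1.le hi.2.le
    rwa [← hq_eq] at this
  · rw [hsum]
    refine (SupportCardNear.single ?_).mix (.single ?_) _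
    · rw [card_insert_of_notMem hiS, abs_lt]
      constructor <;> push_cast <;> linarith [hi.1, hi.2]
    · rw [abs_lt]
      constructor <;> linarith [hi.1, hi.2]

theorem exists_hasMarginals_supportCardNear (q : ι → ℝ) (hq : ∀ l, q l ∈ Set.Icc 0 1) :
    ∃ D, HasMarginals D q ∧ SupportCardNear D (∑ l, q l) := by
  induction hm : #(fracSupport q) using Nat.strong_induction_on generalizing q with
  | _ m ih =>
  rcases (fracSupport q).eq_empty_or_nonempty with h | ⟨i, hi⟩
  · exact exists_hasMarginals_of_fracSupport_eq_empty hq h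
  rcases eq_singleton_or_nontrivial hi with h | ⟨i, hi, j, hj, hij⟩
  · exact exists_hasMarginals_of_fracSupport_eq_singleton hq h
  obtain ⟨t, ht, hmix⟩ := exists_eq_mix_transfer hij (mem_fracSupport.1 hi) (mem_fracSupport.1 hj)
  obtain ⟨D₁, hD₁, hnear₁⟩ := ih _ (hm ▸ card_lt_card (fracSupport_transfer_ssubset hij hi hj))
    (transfer q i j) (transfer_mem_Icc hij hq) rfl
  obtain ⟨D₂, hD₂, hnear₂⟩ := ih _ (hm ▸ card_lt_card (fracSupport_transfer_ssubset hij.symm hj hi))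
    (transfer q j i) (transfer_mem_Icc hij.symm hq) rfl
  rw [sum_transfer] at hnear₁ hnear₂
  exact ⟨_, hmix ▸ hD₁.mix hD₂ ht.1 ht.2, hnear₁.mix hnear₂ t⟩

end rounding

theorem max_correlated_expectation_k_uniform_general (n k : ℕ)
    (q : Fin n → ℝ) (hq0 : ∀ i, 0 ≤ q i) (hq1 : ∀ i, q i ≤ 1) :
    IsGreatest
      {x : ℝ | ∃ D : Finset (Fin n) → ℝ,
        (∀ S, 0 ≤ D S) ∧ (∑ S : Finset (Fin n), D S = 1) ∧
        (∀ i, (∑ S ∈ Finset.univ.filter (fun S : Finset (Fin n) => i ∈ S), D S) = q i) ∧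
        x = ∑ S : Finset (Fin n), D S * (min S.card k : ℕ)}
      (min (∑ i, q i) (k : ℝ)) := by
  obtain ⟨D, hD, hnear⟩ := exists_hasMarginals_supportCardNear q fun i => ⟨hq0 i, hq1 i⟩
  refine ⟨⟨D, hD.nonneg, hD.sum_eq_one, hD.marginal_eq, (hD.sum_mul_min_card_eq hnear k).symm⟩, ?_⟩
  rintro x ⟨D, hD₀, hD₁, hDq, rfl⟩
  exact HasMarginals.sum_mul_min_card_le ⟨hD₀, hD₁, hDq⟩ k

/-- Among all distributions on `2^N` with given marginals `q`, the maximum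
expectation of `S ↦ min(|S|, k)` equals `min(Σ_i q_i, k)`. -/
theorem max_correlated_expectation_k_uniform (n k : ℕ) (hk : 1 ≤ k)
    (q : Fin n → ℝ) (hq0 : ∀ i, 0 ≤ q i) (hq1 : ∀ i, q i ≤ 1) :
    IsGreatest
      {x : ℝ | ∃ D : Finset (Fin n) → ℝ,
        (∀ S, 0 ≤ D S) ∧ (∑ S : Finset (Fin n), D S = 1) ∧
        (∀ i, (∑ S ∈ Finset.univ.filter (fun S : Finset (Fin n) => i ∈ S), D S) = q i) ∧
        x = ∑ S : Finset (Fin n), D S * (min S.card k : ℕ)}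
      (min (∑ i, q i) (k : ℝ)) :=
  max_correlated_expectation_k_uniform_general n k q hq0 hq1
end

section
/- Let X be a binomial random variable with parameters n-1 and r/n, where 0 < r ≤ k ≤ n. Then (1/r)·E[min(Y,k)] = E[min(X+1,k)/(X+1)], where Y ~ Binomial(n, r/n). Moreover E[min(X+1,k)/(X+1)] is non-increasing in r on (0,k]. -/
/-! Write `E_m[h](p)` for the mean of `h(X)` with `X ~ Binomial(m, p)`. Absorbing the factor `t`
into the binomial coefficient, `t·C(m+1,t) = (m+1)·C(m,t-1)`, gives the size-bias identity
`E_{m+1}[t·f(t)](p) = (m+1)·p·E_m[f(t+1)](p)`; with `f(t) = min(t,k)/t` and `p = r/n` this is the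
identity. Splitting off the last trial gives `E_{m+1}[h] = (1-p)·E_m[h] + p·E_m[h(·+1)]`, and
induction on `m` shows that `E_m[h](p)` decreases in `p` whenever `h` is antitone; here
`h(t) = min(t+1,k)/(t+1) = min(1, k/(t+1))`. -/

open Finset

/-- `E[min(X+1,k)/(X+1)]` for `X ~ Binomial(n-1, r/n)`. -/
noncomputable def g (n k : ℕ) (r : ℝ) : ℝ :=
  ∑ t ∈ Finset.range n,
    ((n - 1).choose t : ℝ) * (r / n) ^ t * (1 - r / n) ^ (n - 1 - t) *
      ((min (t + 1) k : ℕ) / ((t : ℝ) + 1))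

noncomputable def binomialExpectation (m : ℕ) (h : ℕ → ℝ) (p : ℝ) : ℝ :=
  ∑ t ∈ range (m + 1), (m.choose t : ℝ) * p ^ t * (1 - p) ^ (m - t) * h t

namespace binomialExpectation

theorem succ (m : ℕ) (h : ℕ → ℝ) (p : ℝ) :
    binomialExpectation (m + 1) h p =
      (1 - p) * binomialExpectation m h p + p * binomialExpectation m (fun t => h (t + 1)) p := by
  have hpascal : ∀ t ∈ range (m + 1), ((m + 1).choose (t + 1) : ℝ) * p ^ (t + 1) *
      (1 - p) ^ (m + 1 - (t + 1)) * h (t + 1) =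
        p * ((m.choose t : ℝ) * p ^ t * (1 - p) ^ (m - t) * h (t + 1)) +
          (m.choose (t + 1) : ℝ) * p ^ (t + 1) * (1 - p) ^ (m - t) * h (t + 1) := by
    intro t _
    rw [Nat.choose_succ_succ', Nat.add_sub_add_right]
    push_cast
    ring
  have hfail : (1 - p) * binomialExpectation m h p =
      ∑ t ∈ range (m + 1), (m.choose (t + 1) : ℝ) * p ^ (t + 1) * (1 - p) ^ (m - t) * h (t + 1) +
        (1 - p) ^ (m + 1) * h 0 := by
    rw [binomialExpectation, mul_sum, sum_range_succ', sum_range_succ, Nat.choose_succ_self]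
    simp only [Nat.cast_zero, zero_mul, add_zero, Nat.choose_zero_right, Nat.cast_one, pow_zero,
      Nat.sub_zero, one_mul]
    congr 1
    · refine sum_congr rfl fun t ht => ?_
      rw [show m - t = m - (t + 1) + 1 by have := mem_range.mp ht; omega, pow_succ]
      ring
    · ring
  rw [binomialExpectation, sum_range_succ', sum_congr rfl hpascal, sum_add_distrib, hfail,
    binomialExpectation, mul_sum]
  simp only [Nat.choose_zero_right, Nat.cast_one, pow_zero, Nat.sub_zero, one_mul]
  ring

theorem mono {m : ℕ} {h₁ h₂ : ℕ → ℝ} (hle : h₁ ≤ h₂) {p : ℝ} (hp₀ : 0 ≤ p) (hp₁ : p ≤ 1) :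
    binomialExpectation m h₁ p ≤ binomialExpectation m h₂ p :=
  sum_le_sum fun t _ => mul_le_mul_of_nonneg_left (hle t) (by have := sub_nonneg.2 hp₁; positivity)

theorem antitoneOn {h : ℕ → ℝ} (hh : Antitone h) (m : ℕ) :
    AntitoneOn (binomialExpectation m h) (Set.Icc 0 1) := by
  induction m generalizing h with
  | zero => intro p _ q _ _; simp [binomialExpectation]
  | succ m ih =>
    rintro p hp q hq hpq
    have hshift : Antitone fun t => h (t + 1) := fun a b hab => hh (Nat.add_le_add_right hab 1)
    have hE := ih hh hp hq hpq
    have hE' := ih hshift hp hq hpq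
    have hstep : binomialExpectation m (fun t => h (t + 1)) p ≤ binomialExpectation m h p :=
      mono (fun t => hh (Nat.le_succ t)) hp.1 hp.2
    rw [succ, succ]
    calc (1 - q) * binomialExpectation m h q + q * binomialExpectation m (fun t => h (t + 1)) q
        ≤ (1 - q) * binomialExpectation m h p + q * binomialExpectation m (fun t => h (t + 1)) p := by
          gcongr
          exacts [sub_nonneg.2 hq.2, hq.1]
      _ = (1 - p) * binomialExpectation m h p + p * binomialExpectation m (fun t => h (t + 1)) p +
            (q - p) * (binomialExpectation m (fun t => h (t + 1)) p - binomialExpectation m h p) := by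
          ring
      _ ≤ (1 - p) * binomialExpectation m h p +
            p * binomialExpectation m (fun t => h (t + 1)) p :=
          add_le_of_nonpos_right (mul_nonpos_of_nonneg_of_nonpos (sub_nonneg.2 hpq) (sub_nonpos.2 hstep))

theorem mul_self {m : ℕ} (f : ℕ → ℝ) (p : ℝ) :
    binomialExpectation (m + 1) (fun t => t * f t) p =
      (m + 1) * p * binomialExpectation m (fun t => f (t + 1)) p := by
  rw [binomialExpectation, sum_range_succ', binomialExpectation, mul_sum]
  simp only [Nat.cast_zero, zero_mul, mul_zero, add_zero]
  refine sum_congr rfl fun t _ => ?_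
  have habsorb : ((m + 1).choose (t + 1) : ℝ) * (t + 1) = (m + 1) * m.choose t := by
    exact_mod_cast (Nat.add_one_mul_choose_eq m t).symm
  rw [Nat.add_sub_add_right]
  push_cast
  linear_combination p ^ (t + 1) * (1 - p) ^ (m - t) * f (t + 1) * habsorb

end binomialExpectation

theorem min_div_self_antitoneOn {c : ℝ} (hc : 0 ≤ c) :
    AntitoneOn (fun x : ℝ => min x c / x) (Set.Ioi 0) := by
  intro a (ha : 0 < a) b (hb : 0 < b) hab
  dsimp only
  rw [← min_div_div_right hb.le, ← min_div_div_right ha.le, div_self hb.ne', div_self ha.ne']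
  exact min_le_min_left 1 (div_le_div_of_nonneg_left hc ha hab)

theorem antitone_min_succ_div_succ (k : ℕ) :
    Antitone fun t : ℕ => ((min (t + 1) k : ℕ) : ℝ) / ((t + 1 : ℕ) : ℝ) := by
  intro a b hab
  simp only [Nat.cast_min]
  exact min_div_self_antitoneOn (Nat.cast_nonneg k) (by positivity : (0 : ℝ) < (a + 1 : ℕ))
    (by positivity : (0 : ℝ) < (b + 1 : ℕ)) (by gcongr)

theorem natCast_mul_min_div_self (t k : ℕ) :
    (t : ℝ) * (((min t k : ℕ) : ℝ) / t) = (min t k : ℕ) := by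
  rcases eq_or_ne t 0 with rfl | ht
  · simp
  · exact mul_div_cancel₀ _ (Nat.cast_ne_zero.2 ht)

theorem g_succ (m k : ℕ) (r : ℝ) :
    g (m + 1) k r =
      binomialExpectation m (fun t => ((min (t + 1) k : ℕ) : ℝ) / ((t + 1 : ℕ) : ℝ))
        (r / (m + 1 : ℕ)) := by
  simp only [g, binomialExpectation, Nat.add_sub_cancel, Nat.cast_succ]

theorem binomial_identity_and_monotone_general (n k : ℕ) (hkn : k ≤ n) :
    (∀ r : ℝ, 0 < r → r ≤ (k : ℝ) →
      (1 / r) * ∑ t ∈ Finset.range (n + 1),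
          (n.choose t : ℝ) * (r / n) ^ t * (1 - r / n) ^ (n - t) * (min t k : ℕ)
        = g n k r) ∧
    (∀ r₁ r₂ : ℝ, 0 < r₁ → r₁ ≤ r₂ → r₂ ≤ (k : ℝ) → g n k r₂ ≤ g n k r₁) := by
  rcases n with _ | m
  · simp [g]
  refine ⟨fun r hr _ => ?_, fun r₁ r₂ hr₁ hr₁₂ hr₂ => ?_⟩
  · change (1 / r) * binomialExpectation (m + 1) (fun t => ((min t k : ℕ) : ℝ)) _ = _
    rw [← funext fun t => natCast_mul_min_div_self t k, binomialExpectation.mul_self, g_succ]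
    push_cast
    field_simp
  · have hm : (0 : ℝ) < (m + 1 : ℕ) := by positivity
    have hp₁ : 0 ≤ r₁ / (m + 1 : ℕ) := div_nonneg hr₁.le hm.le
    have hp₂ : r₂ / (m + 1 : ℕ) ≤ 1 := (div_le_one hm).2 (hr₂.trans (by exact_mod_cast hkn))
    have hp₁₂ : r₁ / (m + 1 : ℕ) ≤ r₂ / (m + 1 : ℕ) := by gcongr
    rw [g_succ, g_succ]
    exact binomialExpectation.antitoneOn (antitone_min_succ_div_succ k) m
      ⟨hp₁, hp₁₂.trans hp₂⟩ ⟨hp₁.trans hp₁₂, hp₂⟩ hp₁₂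

theorem binomial_identity_and_monotone (n k : ℕ) (hn : 1 ≤ n) (hk : 1 ≤ k)
    (hkn : k ≤ n) :
    (∀ r : ℝ, 0 < r → r ≤ (k : ℝ) →
      (1 / r) * ∑ t ∈ Finset.range (n + 1),
          (n.choose t : ℝ) * (r / n) ^ t * (1 - r / n) ^ (n - t) * (min t k : ℕ)
        = g n k r) ∧
    (∀ r₁ r₂ : ℝ, 0 < r₁ → r₁ ≤ r₂ → r₂ ≤ (k : ℝ) → g n k r₂ ≤ g n k r₁) :=
  binomial_identity_and_monotone_general n k hkn
end

section
/- The greedy algorithm gives a p-approximation for maximum-weight independent set in a p-independent set system: if (N,I) is p-independent and w ≥ 0, then the greedy solution on any S ⊆ N has weight at least w*(S)/p. -/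
open Finset

/-- The weighted rank function of a set system. -/
noncomputable def wstar {α : Type*} [DecidableEq α] (I : Finset (Finset α))
    (w : α → ℝ) (S : Finset α) : ℝ :=
  (S.powerset.filter (fun T => T ∈ I)).fold max 0 (fun T => ∑ i ∈ T, w i)

/-- Greedy: process elements in the given list order, adding an element whenever
feasibility is preserved. -/
def greedyAux {α : Type*} [DecidableEq α] (I : Finset (Finset α)) :
    List α → Finset α → Finset α
  | [], A => A
  | i :: rest, A =>
      if insert i A ∈ I then greedyAux I rest (insert i A) else greedyAux I rest A

/-- `B` is a base (maximal feasible subset) of `S`. -/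
def IsBase {α : Type*} [DecidableEq α] (I : Finset (Finset α))
    (S B : Finset α) : Prop :=
  B ⊆ S ∧ B ∈ I ∧ ∀ x ∈ S \ B, insert x B ∉ I

/-!
Let `G` be the greedy solution and `g k ⊆ G` the greedy solution on the first `k` elements of
`l`. Greedy never regrets a rejection, so `g k` is a base of that prefix, and by
`p`-independence every feasible `T` meets the prefix in at most `p * #(g k) ≤ p * #(G ∩ prefix)`
elements. As the weights decrease along `l`, the weight of a set is a nonnegative combination of
its prefix counts (the coefficients are the gaps between consecutive weights), so the counting
bound becomes `∑ i ∈ T, w i ≤ p * ∑ i ∈ G, w i`.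
-/

section GreedyFacts

variable {α : Type*} [DecidableEq α] {I : Finset (Finset α)}

theorem subset_greedyAux : ∀ (l : List α) (A : Finset α), A ⊆ greedyAux I l A
  | [], _ => subset_rfl
  | i :: l, A => by
    rw [greedyAux]
    split
    · exact (subset_insert i A).trans (subset_greedyAux l _)
    · exact subset_greedyAux l A

theorem greedyAux_append :
    ∀ (l₁ l₂ : List α) (A : Finset α), greedyAux I (l₁ ++ l₂) A = greedyAux I l₂ (greedyAux I l₁ A)
  | [], _, _ => rfl
  | i :: l₁, l₂, A => by
    rw [List.cons_append, greedyAux, greedyAux]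
    split <;> apply greedyAux_append

theorem greedyAux_take_subset (l : List α) (k : ℕ) (A : Finset α) :
    greedyAux I (l.take k) A ⊆ greedyAux I l A := by
  conv_rhs => rw [← List.take_append_drop k l, greedyAux_append]
  exact subset_greedyAux _ _

/-- Greedy extends a base of `S` to a base of `S ∪ l`: an element rejected at some stage stays
rejected later, since the current solution only grows and `I` is downward closed. -/
theorem isBase_greedyAux (hdown : ∀ S T : Finset α, S ⊆ T → T ∈ I → S ∈ I) :
    ∀ (l : List α) {S A : Finset α}, IsBase I S A → IsBase I (S ∪ l.toFinset) (greedyAux I l A)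
  | [], S, A, hA => by simpa [greedyAux] using hA
  | i :: l, S, A, ⟨hAS, hAI, hAmax⟩ => by
    rw [greedyAux, List.toFinset_cons, union_insert, ← insert_union]
    split
    case isTrue hiA =>
      refine isBase_greedyAux hdown l ⟨insert_subset_insert i hAS, hiA, fun x hx hxI => ?_⟩
      have hxA : x ∈ S \ A := by grind
      exact hAmax x hxA (hdown _ _ (insert_subset_insert x (subset_insert i A)) hxI)
    case isFalse hiA =>
      refine isBase_greedyAux hdown l ⟨hAS.trans (subset_insert i S), hAI, fun x hx => ?_⟩
      rcases mem_insert.mp (mem_sdiff.mp hx).1 with rfl | hxS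
      · exact hiA
      · exact hAmax x (mem_sdiff.mpr ⟨hxS, (mem_sdiff.mp hx).2⟩)

theorem exists_isBase_superset (hdown : ∀ S T : Finset α, S ⊆ T → T ∈ I → S ∈ I)
    {S T : Finset α} (hTS : T ⊆ S) (hT : T ∈ I) : ∃ B, T ⊆ B ∧ IsBase I S B := by
  refine ⟨greedyAux I S.toList T, subset_greedyAux _ _, ?_⟩
  simpa [union_eq_right.mpr hTS] using isBase_greedyAux hdown S.toList ⟨subset_rfl, hT, by simp⟩

/-- Discrete layer cake: induct on `l` from the right, subtracting the last (smallest) weight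
`w x` from all weights. -/
theorem sum_le_mul_sum_of_card_inter_take_le {p : ℝ} {l : List α} {w : α → ℝ}
    {T G : Finset α} (hw : ∀ i ∈ l, 0 ≤ w i) (hsorted : l.Pairwise (fun a b => w b ≤ w a))
    (hT : T ⊆ l.toFinset) (hG : G ⊆ l.toFinset)
    (hcard : ∀ k, (#(T ∩ (l.take k).toFinset) : ℝ) ≤ p * #(G ∩ (l.take k).toFinset)) :
    ∑ i ∈ T, w i ≤ p * ∑ i ∈ G, w i := by
  induction l using List.reverseRecOn generalizing w T G with
  | nil => simp_all
  | append_singleton l x ih =>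
    obtain ⟨hsorted', -, hxmin⟩ := List.pairwise_append.mp hsorted
    simp only [List.mem_singleton, forall_eq] at hxmin
    have hdrop : ∀ U ⊆ (l ++ [x]).toFinset,
        ∑ i ∈ U, (w i - w x) = ∑ i ∈ U ∩ l.toFinset, (w i - w x) := by
      intro U hU
      refine (sum_subset inter_subset_left fun i hiU hil => ?_).symm
      have hil' : i ∉ l := fun h => hil (mem_inter.mpr ⟨hiU, List.mem_toFinset.mpr h⟩)
      have hix : i = x := by simpa [hil'] using List.mem_toFinset.mp (hU hiU)
      simp [hix]
    have hprefix : ∀ (U : Finset α) k,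
        U ∩ l.toFinset ∩ (l.take k).toFinset = U ∩ ((l ++ [x]).take (min k l.length)).toFinset := by
      intro U k
      have hsub : (l.take k).toFinset ⊆ l.toFinset := fun i hi =>
        List.mem_toFinset.mpr ((List.take_sublist k l).subset (List.mem_toFinset.mp hi))
      rw [inter_assoc, inter_eq_right.mpr hsub, ← List.take_take, List.take_left]
    have hcard_all : (#T : ℝ) ≤ p * #G := by
      simpa only [List.take_length, inter_eq_left.mpr hT, inter_eq_left.mpr hG] using
        hcard (l ++ [x]).length
    have hshift := ih (w := fun i => w i - w x) (T := T ∩ l.toFinset) (G := G ∩ l.toFinset)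
      (fun i hi => sub_nonneg.mpr (hxmin i hi)) (hsorted'.imp fun h => sub_le_sub_right h _)
      inter_subset_right inter_subset_right (fun k => by simpa only [hprefix] using hcard _)
    have hwx : 0 ≤ w x := hw x (by simp)
    calc ∑ i ∈ T, w i = ∑ i ∈ T, (w i - w x) + w x * #T := by
          rw [sum_sub_distrib, sum_const, nsmul_eq_mul]; ring
      _ ≤ p * ∑ i ∈ G, (w i - w x) + w x * (p * #G) := by
          rw [hdrop T hT, hdrop G hG]; gcongr
      _ = p * ∑ i ∈ G, w i := by
          rw [sum_sub_distrib, sum_const, nsmul_eq_mul]; ring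

theorem card_inter_le_mul_card_of_isBase {p : ℝ} (hdown : ∀ S T : Finset α, S ⊆ T → T ∈ I → S ∈ I)
    (hpind : ∀ S B₁ B₂ : Finset α, S.Nonempty → IsBase I S B₁ → IsBase I S B₂ →
      (B₁.card : ℝ) ≤ p * B₂.card)
    {S T B : Finset α} (hT : T ∈ I) (hB : IsBase I S B) : (#(T ∩ S) : ℝ) ≤ p * #B := by
  rcases S.eq_empty_or_nonempty with rfl | hS
  · simp [subset_empty.mp hB.1]
  obtain ⟨B', hTB', hB'⟩ :=
    exists_isBase_superset hdown inter_subset_right (hdown _ _ inter_subset_left hT)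
  calc (#(T ∩ S) : ℝ) ≤ #B' := mod_cast card_le_card hTB'
    _ ≤ p * #B := hpind S B' B hS hB' hB

theorem wstar_le {w : α → ℝ} {S : Finset α} {c : ℝ} (hc : 0 ≤ c)
    (h : ∀ T ⊆ S, T ∈ I → ∑ i ∈ T, w i ≤ c) : wstar I w S ≤ c := by
  rw [wstar, fold_max_le]
  exact ⟨hc, fun T hT => h T (mem_powerset.mp (mem_filter.mp hT).1) (mem_filter.mp hT).2⟩

end GreedyFacts

theorem greedy_p_approx_general {α : Type*} [DecidableEq α]
    (I : Finset (Finset α)) (w : α → ℝ) (p : ℝ)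
    (hp : 0 < p)
    (hw : ∀ i, 0 ≤ w i)
    (hempty : ∅ ∈ I)
    (hdown : ∀ S T : Finset α, S ⊆ T → T ∈ I → S ∈ I)
    (hpind : ∀ S B₁ B₂ : Finset α, S.Nonempty → IsBase I S B₁ → IsBase I S B₂ →
      (B₁.card : ℝ) ≤ p * B₂.card)
    (S : Finset α) (l : List α)
    (henum : l.toFinset = S)
    (hsorted : l.Pairwise (fun a b => w b ≤ w a)) :
    wstar I w S / p ≤ ∑ i ∈ greedyAux I l ∅, w i := by
  set G := greedyAux I l ∅
  have hbase : ∀ l' : List α, IsBase I l'.toFinset (greedyAux I l' ∅) := fun l' => by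
    simpa using isBase_greedyAux hdown l' ⟨subset_rfl, hempty, by simp⟩
  have hcard : ∀ T ∈ I, ∀ k, (#(T ∩ (l.take k).toFinset) : ℝ) ≤ p * #(G ∩ (l.take k).toFinset) :=
    fun T hT k => calc
      (#(T ∩ (l.take k).toFinset) : ℝ) ≤ p * #(greedyAux I (l.take k) ∅) :=
        card_inter_le_mul_card_of_isBase hdown hpind hT (hbase _)
      _ ≤ p * #(G ∩ (l.take k).toFinset) := by
        gcongr
        exact subset_inter (greedyAux_take_subset l k ∅) (hbase _).1
  rw [div_le_iff₀ hp, mul_comm]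
  refine wstar_le (mul_nonneg hp.le (sum_nonneg fun i _ => hw i)) fun T hTS hT => ?_
  exact sum_le_mul_sum_of_card_inter_take_le (fun i _ => hw i) hsorted (henum ▸ hTS) (hbase l).1
    (hcard T hT)

/-- In a `p`-independent set system, greedy (in non-increasing weight order) is
a `p`-approximation to the maximum-weight feasible subset. -/
theorem greedy_p_approx {α : Type*} [DecidableEq α]
    (I : Finset (Finset α)) (w : α → ℝ) (p : ℝ)
    (hp : 0 < p)
    (hw : ∀ i, 0 ≤ w i)
    (hempty : ∅ ∈ I)
    (hdown : ∀ S T : Finset α, S ⊆ T → T ∈ I → S ∈ I)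
    (hpind : ∀ S B₁ B₂ : Finset α, S.Nonempty → IsBase I S B₁ → IsBase I S B₂ →
      (B₁.card : ℝ) ≤ p * B₂.card)
    (S : Finset α) (l : List α)
    (hnodup : l.Nodup) (henum : l.toFinset = S)
    (hsorted : l.Pairwise (fun a b => w b ≤ w a)) :
    wstar I w S / p ≤ ∑ i ∈ greedyAux I l ∅, w i :=
  greedy_p_approx_general I w p hp hw hempty hdown hpind S l henum hsorted
end

section
/- In a p-independent set system, let greedy run on a set and let A = {i_1,...,i_l} be its output (in inclusion order), with ignored elements partitioned into B_1,...,B_l, where B_j consists of elements ignored after i_1,...,i_j were added, each with weight at most w_{i_j}, and suppose fractional values q̃_i ∈ [0,1] on ignored elements satisfy Σ_{i ∈ B_1∪...∪B_j} q̃_i ≤ p·j for every j. Then Σ_{i ∈ U} q̃_i w_i ≤ p · Σ_{i∈A} w_i, where U = B_1∪...∪B_l. -/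
/-!
Abel summation rewrites `∑ j, s j * a j` as `∑ j, (s 0 + ⋯ + s j) * (a j - a (j + 1))` when
`a l = 0`. If `a` is antitone the differences are nonnegative, so each partial sum may be
replaced by its bound `p * (j + 1)`; summing by parts back gives `p * ∑ j, a j`.
-/

open Finset

theorem sum_range_mul_eq_sum_partialSum_mul_sub (s a : ℕ → ℝ) (n : ℕ) :
    ∑ j ∈ range n, s j * a j =
      ∑ j ∈ range n, (∑ k ∈ range (j + 1), s k) * (a j - a (j + 1)) +
        (∑ k ∈ range n, s k) * a n := by
  induction n with
  | zero => simp
  | succ n ih =>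
    rw [sum_range_succ, ih, sum_range_succ _ n, sum_range_succ s n]
    ring

theorem sum_range_mul_le_mul_sum_of_partialSum_le {s a : ℕ → ℝ} {l : ℕ} {p : ℝ}
    (ha : ∀ j < l, a (j + 1) ≤ a j) (hl : a l = 0)
    (hs : ∀ j < l, ∑ k ∈ range (j + 1), s k ≤ p * (j + 1)) :
    ∑ j ∈ range l, s j * a j ≤ p * ∑ j ∈ range l, a j := by
  have hconst : ∑ j ∈ range l, a j = ∑ j ∈ range l, ((j : ℝ) + 1) * (a j - a (j + 1)) := by
    simpa [hl] using sum_range_mul_eq_sum_partialSum_mul_sub (fun _ ↦ 1) a l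
  rw [sum_range_mul_eq_sum_partialSum_mul_sub, hl, mul_zero, add_zero, hconst, mul_sum]
  refine sum_le_sum fun j hj ↦ ?_
  rw [← mul_assoc]
  exact mul_le_mul_of_nonneg_right (hs j (mem_range.1 hj)) (sub_nonneg.2 (ha j (mem_range.1 hj)))

theorem abel_summation_greedy_bound_general {α : Type*} [DecidableEq α]
    (l : ℕ) (p : ℝ)
    (wA : ℕ → ℝ) (B : ℕ → Finset α) (qt w : α → ℝ)
    (hwAmono : ∀ j, j < l → wA (j + 1) ≤ wA j)
    (hwAlast : wA l = 0)
    (hdisj : ∀ j j', j < l → j' < l → j ≠ j' → Disjoint (B j) (B j'))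
    (hq0 : ∀ i, 0 ≤ qt i)
    (hcap : ∀ j, j < l → ∀ i ∈ B j, w i ≤ wA j)
    (hfrac : ∀ j, j < l →
      ∑ i ∈ (Finset.range (j + 1)).biUnion B, qt i ≤ p * (j + 1)) :
    ∑ j ∈ Finset.range l, ∑ i ∈ B j, qt i * w i ≤
      p * ∑ j ∈ Finset.range l, wA j := by
  have hblock : ∀ j ∈ range l, ∑ i ∈ B j, qt i * w i ≤ (∑ i ∈ B j, qt i) * wA j :=
    fun j hj ↦ sum_mul (B j) qt (wA j) ▸ sum_le_sum fun i hi ↦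
      mul_le_mul_of_nonneg_left (hcap j (mem_range.1 hj) i hi) (hq0 i)
  have hpartial : ∀ j < l, ∑ k ∈ range (j + 1), ∑ i ∈ B k, qt i ≤ p * (j + 1) := by
    intro j hj
    rw [← sum_biUnion fun k hk k' hk' ↦ hdisj k k' (by grind) (by grind)]
    exact hfrac j hj
  exact (sum_le_sum hblock).trans
    (sum_range_mul_le_mul_sum_of_partialSum_le hwAmono hwAlast hpartial)

/-- Abel-summation bound for the greedy analysis in `p`-independent systems:
if the ignored elements are partitioned into blocks `B 0, …, B (l-1)` with
block weight caps `wA 0 ≥ wA 1 ≥ … ≥ wA (l-1) ≥ wA l = 0` and the fractional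
values satisfy `Σ_{i ∈ B 0 ∪ … ∪ B j} q̃ i ≤ p·(j+1)`, then the total fractional
weight of ignored elements is at most `p` times the greedy weight. -/
theorem abel_summation_greedy_bound {α : Type*} [DecidableEq α]
    (l : ℕ) (p : ℝ) (hp : 0 ≤ p)
    (wA : ℕ → ℝ) (B : ℕ → Finset α) (qt w : α → ℝ)
    (hwA0 : ∀ j, 0 ≤ wA j)
    (hwAmono : ∀ j, j < l → wA (j + 1) ≤ wA j)
    (hwAlast : wA l = 0)
    (hdisj : ∀ j j', j < l → j' < l → j ≠ j' → Disjoint (B j) (B j'))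
    (hq0 : ∀ i, 0 ≤ qt i) (hq1 : ∀ i, qt i ≤ 1)
    (hw : ∀ i, 0 ≤ w i)
    (hcap : ∀ j, j < l → ∀ i ∈ B j, w i ≤ wA j)
    (hfrac : ∀ j, j < l →
      ∑ i ∈ (Finset.range (j + 1)).biUnion B, qt i ≤ p * (j + 1)) :
    ∑ j ∈ Finset.range l, ∑ i ∈ B j, qt i * w i ≤
      p * ∑ j ∈ Finset.range l, wA j :=
  abel_summation_greedy_bound_general l p wA B qt w hwAmono hwAlast hdisj hq0 hcap hfrac
end
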